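/- arXiv:1709.01610 — 9 statements merged into one kernel-verified Lean document; each statement's English description precedes it below -/
import Mathlib

section
/- Let H ∈ ℝ^{n×n} be symmetric positive definite, P ∈ ℝ^{m×m} symmetric with 0 ⪯ P ⪯ I, T ∈ ℝ^{m×n} full row rank, and μ > 0. Then the block matrix M = [[H + (1/μ)Tᵀ(I−P)T, Tᵀ(I−P)], [(I−P)T, −μP]] is invertible. -/
/-!
The matrix has saddle-point form `[[A, B], [Bᵀ, -C]]` with `A = H + μ⁻¹ Tᵀ(I-P)T ≻ 0`,
`B = Tᵀ(I-P)` and `C = μP ⪰ 0`. For a kernel vector `(x, y)`, pairing the two block rows with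
`x` and `y` cancels the coupling terms `xᵀBy = yᵀBᵀx`, leaving `xᵀAx + yᵀCy = 0`; hence `x = 0`
and `Py = 0`. Then `(I-P)y = y`, so the first block row says `Tᵀy = 0`, and `y = 0` because `T`
has full row rank.
-/

open Matrix

namespace Matrix

variable {ι κ : Type*} [Fintype ι] [Fintype κ]

theorem mulVec_transpose_injective_of_rank_eq_card {K : Type*} [Field K] {T : Matrix κ ι K}
    (hT : T.rank = Fintype.card κ) : Function.Injective Tᵀ.mulVec := by
  rw [mulVec_injective_iff, col_transpose]
  exact linearIndependent_iff_card_eq_finrank_span.mpr (hT ▸ T.rank_eq_finrank_span_row)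

theorem isUnit_fromBlocks_neg_of_posDef_of_posSemidef [DecidableEq ι] [DecidableEq κ]
    {A : Matrix ι ι ℝ} {B : Matrix ι κ ℝ} {C : Matrix κ κ ℝ} (hA : A.PosDef) (hC : C.PosSemidef)
    (hBC : ∀ y, B *ᵥ y = 0 → C *ᵥ y = 0 → y = 0) :
    IsUnit (fromBlocks A B Bᵀ (-C)) := by
  rw [isUnit_iff_isUnit_det, isUnit_iff_ne_zero, Ne, ← exists_mulVec_eq_zero_iff]
  rintro ⟨v, hv0, hv⟩
  obtain ⟨x, y, rfl⟩ : ∃ x y, v = Sum.elim x y := ⟨_, _, (Sum.elim_comp_inl_inr v).symm⟩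
  simp only [fromBlocks_mulVec, Sum.elim_comp_inl, Sum.elim_comp_inr, neg_mulVec,
    ← Sum.elim_zero_zero, Sum.elim_eq_iff, ← sub_eq_add_neg, sub_eq_zero] at hv hv0
  obtain ⟨hrow₁, hrow₂⟩ := hv
  have hsum : x ⬝ᵥ A *ᵥ x + y ⬝ᵥ C *ᵥ y = 0 := by
    rw [← hrow₂, mulVec_transpose, dotProduct_comm y, ← dotProduct_mulVec, ← dotProduct_add,
      hrow₁, dotProduct_zero]
  have hAx := hA.posSemidef.dotProduct_mulVec_nonneg x
  have hCy := hC.dotProduct_mulVec_nonneg y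
  simp only [star_trivial] at hAx hCy
  have hx : x = 0 := by
    by_contra hx
    have := hA.dotProduct_mulVec_pos hx
    simp only [star_trivial] at this
    linarith
  have hCy0 : C *ᵥ y = 0 :=
    (hC.dotProduct_mulVec_zero_iff y).mp (by simp only [star_trivial]; linarith)
  have hy : y = 0 := hBC y (by rwa [hx, mulVec_zero, zero_add] at hrow₁) hCy0
  exact hv0 (by rw [hx, hy])

end Matrix

/-- The block matrix `[[H + μ⁻¹ Tᵀ(I−P)T, Tᵀ(I−P)], [(I−P)T, −μP]]` is invertible when
`H ≻ 0`, `0 ⪯ P ⪯ I`, `T` has full row rank, and `μ > 0`. -/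
theorem block_matrix_invertible {n m : ℕ} (μ : ℝ) (hμ : 0 < μ)
    (H : Matrix (Fin n) (Fin n) ℝ) (P : Matrix (Fin m) (Fin m) ℝ)
    (T : Matrix (Fin m) (Fin n) ℝ)
    (hH : H.PosDef) (hP : P.PosSemidef) (hIP : (1 - P).PosSemidef)
    (hT : T.rank = m) :
    IsUnit (Matrix.fromBlocks
      (H + μ⁻¹ • (Tᵀ * (1 - P) * T)) (Tᵀ * (1 - P))
      ((1 - P) * T) (-(μ • P))) := by
  have hA : (H + μ⁻¹ • (Tᵀ * (1 - P) * T)).PosDef := by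
    simpa only [conjTranspose_eq_transpose_of_trivial] using
      hH.add_posSemidef ((hIP.conjTranspose_mul_mul_same T).smul (inv_nonneg.mpr hμ.le))
  have hker : ∀ y, (Tᵀ * (1 - P)) *ᵥ y = 0 → (μ • P) *ᵥ y = 0 → y = 0 := by
    intro y hTy hμPy
    have hPy : P *ᵥ y = 0 := by
      rwa [smul_mulVec, smul_eq_zero, or_iff_right hμ.ne'] at hμPy
    rw [← mulVec_mulVec, sub_mulVec, one_mulVec, hPy, sub_zero, ← mulVec_zero Tᵀ] at hTy
    exact mulVec_transpose_injective_of_rank_eq_card (by rw [hT, Fintype.card_fin]) hTy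
  have hBt : (Tᵀ * (1 - P))ᵀ = (1 - P) * T := by
    rw [transpose_mul, transpose_transpose, ← conjTranspose_eq_transpose_of_trivial, hIP.1]
  simpa only [hBt] using isUnit_fromBlocks_neg_of_posDef_of_posSemidef hA (hP.smul hμ.le) hker
end

section
/- Under the same hypotheses (H ≻ 0, 0 ⪯ P ⪯ I symmetric, T full row rank, μ > 0), the block matrix [[H + (1/μ)Tᵀ(I−P)T, Tᵀ(I−P)], [(I−P)T, −μP]] has exactly n positive eigenvalues and m negative eigenvalues. -/
/-!
With `A = H + μ⁻¹ Tᵀ(I - P)T ≻ 0` and `B = Tᵀ(I - P)`, block elimination against `A` makes the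
matrix congruent to `diag(A, -(Bᵀ A⁻¹ B + μ P))`. The Schur block is negative definite: a vector
`x` isotropic for both summands has `B x = 0`, hence `(I - P) x = 0` since `Tᵀ` is injective,
and `P x = 0`. So the `n`-dimensional and `m`-dimensional test subspaces on which the form is
positive resp. negative definite force at least `n` positive and `m` negative eigenvalues, and
as there are only `n + m` eigenvalues both bounds are equalities.
-/

open Matrix

namespace Matrix

lemma dotProduct_transpose_mul_mul_mulVec {ι κ R : Type*} [Fintype ι] [Fintype κ]
    [CommSemiring R] (M : Matrix ι ι R) (X : Matrix ι κ R) (y : κ → R) :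
    y ⬝ᵥ (Xᵀ * M * X) *ᵥ y = (X *ᵥ y) ⬝ᵥ M *ᵥ (X *ᵥ y) := by
  rw [← mulVec_mulVec, ← mulVec_mulVec, dotProduct_mulVec, ← mulVec_transpose,
    transpose_transpose]

lemma vecMul_injective_of_rank_eq {m n K : Type*} [Fintype m] [Fintype n] [Field K]
    {T : Matrix m n K} (hT : T.rank = Fintype.card m) : Function.Injective T.vecMul := by
  rw [vecMul_injective_iff, linearIndependent_iff_card_eq_finrank_span, ← hT,
    rank_eq_finrank_span_row]
  rfl

variable {ι : Type*} [Fintype ι] [DecidableEq ι] {M : Matrix ι ι ℝ}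

lemma IsHermitian.dotProduct_mulVec_eq_sum_eigenvalues (hM : M.IsHermitian) (x : ι → ℝ) :
    x ⬝ᵥ M *ᵥ x =
      ∑ i, hM.eigenvalues i * ((hM.eigenvectorUnitary : Matrix ι ι ℝ)ᵀ *ᵥ x) i ^ 2 := by
  set U : Matrix ι ι ℝ := (hM.eigenvectorUnitary : Matrix ι ι ℝ)
  have hstar : star U = Uᵀ := by
    rw [star_eq_conjTranspose, conjTranspose_eq_transpose_of_trivial]
  conv_lhs => rw [hM.spectral_theorem, Unitary.conjStarAlgAut_apply, hstar]
  rw [← mulVec_mulVec, ← mulVec_mulVec, dotProduct_mulVec, ← mulVec_transpose]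
  simp only [dotProduct, mulVec_diagonal, Function.comp_apply, RCLike.ofReal_real_eq_id, id]
  exact Finset.sum_congr rfl fun i _ => by ring

/-- With `c = 1` and `c = -1` this bounds the positive and the negative index from below. -/
lemma IsHermitian.card_le_ncard_of_posDef_smul_conj (hM : M.IsHermitian) {κ : Type*}
    [Fintype κ] {c : ℝ} (X : Matrix ι κ ℝ) (hX : (c • (Xᵀ * M * X)).PosDef) :
    Fintype.card κ ≤ {i | 0 < c * hM.eigenvalues i}.ncard := by
  let f : (κ → ℝ) →ₗ[ℝ] ({i | 0 < c * hM.eigenvalues i} → ℝ) :=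
    LinearMap.funLeft ℝ ℝ Subtype.val ∘ₗ
      (hM.eigenvectorUnitary : Matrix ι ι ℝ)ᵀ.mulVecLin ∘ₗ X.mulVecLin
  have hf : Function.Injective f := by
    rw [← LinearMap.ker_eq_bot, Submodule.eq_bot_iff]
    intro y hy
    by_contra hy0
    have hvanish : ∀ i, 0 < c * hM.eigenvalues i →
        ((hM.eigenvectorUnitary : Matrix ι ι ℝ)ᵀ *ᵥ (X *ᵥ y)) i = 0 := fun i hi =>
      congrFun (LinearMap.mem_ker.mp hy) ⟨i, hi⟩
    have hpos := hX.dotProduct_mulVec_pos hy0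
    rw [star_trivial, smul_mulVec, dotProduct_smul, dotProduct_transpose_mul_mul_mulVec,
      hM.dotProduct_mulVec_eq_sum_eigenvalues, smul_eq_mul, Finset.mul_sum] at hpos
    refine hpos.not_ge (Finset.sum_nonpos fun i _ => ?_)
    rcases lt_or_ge 0 (c * hM.eigenvalues i) with h | h
    · simp [hvanish i h]
    · rw [← mul_assoc]
      exact mul_nonpos_of_nonpos_of_nonneg h (sq_nonneg _)
  calc Fintype.card κ = Module.finrank ℝ (κ → ℝ) := (Module.finrank_fintype_fun_eq_card _).symm
    _ ≤ Module.finrank ℝ ({i | 0 < c * hM.eigenvalues i} → ℝ) :=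
      LinearMap.finrank_le_finrank_of_injective hf
    _ = _ := by
      rw [Module.finrank_fintype_fun_eq_card, Set.ncard_eq_toFinset_card', Set.toFinset_card]

lemma IsHermitian.inertia_eq_of_posDef_conj (hM : M.IsHermitian) {κ κ' : Type*} [Fintype κ]
    [Fintype κ'] (hcard : Fintype.card ι = Fintype.card κ + Fintype.card κ')
    (X : Matrix ι κ ℝ) (Y : Matrix ι κ' ℝ) (hX : (Xᵀ * M * X).PosDef)
    (hY : (-(Yᵀ * M * Y)).PosDef) :
    {i | 0 < hM.eigenvalues i}.ncard = Fintype.card κ ∧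
      {i | hM.eigenvalues i < 0}.ncard = Fintype.card κ' := by
  have hpos := hM.card_le_ncard_of_posDef_smul_conj (c := 1) X (by rwa [one_smul])
  have hneg := hM.card_le_ncard_of_posDef_smul_conj (c := -1) Y (by rwa [neg_one_smul])
  simp only [one_mul, neg_one_mul, neg_pos] at hpos hneg
  have hdisj : Disjoint {i | 0 < hM.eigenvalues i} {i | hM.eigenvalues i < 0} :=
    Set.disjoint_left.mpr fun i (h : 0 < hM.eigenvalues i) h' => lt_asymm h h'
  have htotal := Set.ncard_le_card ({i | 0 < hM.eigenvalues i} ∪ {i | hM.eigenvalues i < 0})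
  rw [Set.ncard_union_eq hdisj, Nat.card_eq_fintype_card] at htotal
  omega

lemma IsHermitian.inertia_fromBlocks {m n : Type*} [Fintype m] [DecidableEq m] [Fintype n]
    [DecidableEq n] {A : Matrix m m ℝ} {B : Matrix m n ℝ} {C : Matrix n m ℝ} {D : Matrix n n ℝ}
    (hM : (Matrix.fromBlocks A B C D).IsHermitian) (hA : A.PosDef)
    (hS : (Bᵀ * A⁻¹ * B - D).PosDef) :
    {i | 0 < hM.eigenvalues i}.ncard = Fintype.card m ∧
      {i | hM.eigenvalues i < 0}.ncard = Fintype.card n := by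
  obtain rfl : C = Bᵀ := by
    simpa using congrArg Matrix.transpose (isHermitian_fromBlocks_iff.mp hM).2.2.1
  have hAinv : A * A⁻¹ = 1 := A.mul_nonsing_inv (isUnit_iff_ne_zero.mpr hA.det_pos.ne')
  refine hM.inertia_eq_of_posDef_conj Fintype.card_sum (fromRows 1 0)
    (fromRows (-(A⁻¹ * B)) 1) ?_ ?_
  · simpa [transpose_fromRows, Matrix.mul_assoc, fromBlocks_mul_fromRows,
      fromCols_mul_fromRows] using hA
  · convert hS using 1
    rw [transpose_fromRows, Matrix.mul_assoc, fromBlocks_mul_fromRows, fromCols_mul_fromRows]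
    simp only [Matrix.mul_neg, ← Matrix.mul_assoc, hAinv, Matrix.one_mul, Matrix.mul_one,
      neg_add_cancel, Matrix.mul_zero, transpose_one, zero_add]
    abel

lemma posDef_transpose_mul_mul_add_smul {m n : Type*} [Fintype m] [DecidableEq m] [Fintype n]
    {G : Matrix n n ℝ} (hG : G.PosDef) {P : Matrix m m ℝ} (hP : P.PosSemidef)
    {T : Matrix m n ℝ} (hT : Function.Injective T.vecMul) {μ : ℝ} (hμ : 0 < μ) :
    ((Tᵀ * (1 - P))ᵀ * G * (Tᵀ * (1 - P)) + μ • P).PosDef := by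
  set K := Tᵀ * (1 - P) with hK
  have hKGK : (Kᵀ * G * K).PosSemidef := by
    simpa using hG.posSemidef.conjTranspose_mul_mul_same K
  have hμP : (μ • P).PosSemidef := hP.smul hμ.le
  refine PosDef.of_dotProduct_mulVec_pos (hKGK.add hμP).1 fun x hx =>
    ((hKGK.add hμP).dotProduct_mulVec_nonneg x).lt_of_ne' fun h0 => hx ?_
  rw [add_mulVec, dotProduct_add, add_eq_zero_iff_of_nonneg (hKGK.dotProduct_mulVec_nonneg x)
    (hμP.dotProduct_mulVec_nonneg x), hμP.dotProduct_mulVec_zero_iff, smul_mulVec,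
    smul_eq_zero_iff_right hμ.ne', star_trivial, dotProduct_transpose_mul_mul_mulVec] at h0
  obtain ⟨hGKx, hPx⟩ := h0
  have hKx : K *ᵥ x = 0 := by
    by_contra hKx
    have := hG.dotProduct_mulVec_pos hKx
    rw [star_trivial, hGKx] at this
    exact this.false
  have hIPx : (1 - P) *ᵥ x = 0 := hT <| by
    simpa only [zero_vecMul, ← mulVec_transpose, mulVec_mulVec, mulVec_zero, hK] using hKx
  calc x = (1 - P) *ᵥ x + P *ᵥ x := by rw [sub_mulVec, one_mulVec, sub_add_cancel]
    _ = 0 := by rw [hIPx, hPx, add_zero]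

end Matrix

/-- The block matrix `[[H + μ⁻¹ Tᵀ(I−P)T, Tᵀ(I−P)], [(I−P)T, −μP]]` has exactly `n` positive
eigenvalues and `m` negative eigenvalues when `H ≻ 0`, `0 ⪯ P ⪯ I`, `T` has full row rank,
and `μ > 0`. -/
theorem block_matrix_inertia {n m : ℕ} (μ : ℝ) (hμ : 0 < μ)
    (H : Matrix (Fin n) (Fin n) ℝ) (P : Matrix (Fin m) (Fin m) ℝ)
    (T : Matrix (Fin m) (Fin n) ℝ)
    (hH : H.PosDef) (hP : P.PosSemidef) (hIP : (1 - P).PosSemidef)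
    (hT : T.rank = m)
    (hM : (Matrix.fromBlocks
      (H + μ⁻¹ • (Tᵀ * (1 - P) * T)) (Tᵀ * (1 - P))
      ((1 - P) * T) (-(μ • P))).IsHermitian) :
    {i | 0 < hM.eigenvalues i}.ncard = n ∧ {i | hM.eigenvalues i < 0}.ncard = m := by
  have hA : (H + μ⁻¹ • (Tᵀ * (1 - P) * T)).PosDef := hH.add_posSemidef <| by
    simpa using (hIP.conjTranspose_mul_mul_same T).smul (inv_nonneg.mpr hμ.le)
  have hTinj : Function.Injective T.vecMul := vecMul_injective_of_rank_eq (by simpa using hT)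
  have hS := posDef_transpose_mul_mul_add_smul hA.inv hP hTinj hμ
  rw [← sub_neg_eq_add] at hS
  simpa using hM.inertia_fromBlocks hA hS
end

section
/- With H ≻ 0, 0 ⪯ P ⪯ I symmetric, T full row rank, and μ > 0, the Schur complement −μP − (I−P)T(H + (1/μ)Tᵀ(I−P)T)^{-1}Tᵀ(I−P) is negative definite. -/
open Matrix

namespace Matrix

variable {m n R : Type*} [Fintype n]

theorem PosSemidef.posDef_add [Ring R] [PartialOrder R] [StarRing R] [IsOrderedAddMonoid R]
    {A B : Matrix n n R} (hA : A.PosSemidef) (hB : B.PosSemidef)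
    (h : ∀ x, star x ⬝ᵥ (A *ᵥ x) = 0 → star x ⬝ᵥ (B *ᵥ x) = 0 → x = 0) :
    (A + B).PosDef := by
  refine .of_dotProduct_mulVec_pos (hA.add hB).isHermitian fun x hx => ?_
  have hAx := hA.dotProduct_mulVec_nonneg x
  have hBx := hB.dotProduct_mulVec_nonneg x
  rw [add_mulVec, dotProduct_add]
  rcases hAx.lt_or_eq with hAx' | hAx'
  · exact add_pos_of_pos_of_nonneg hAx' hBx
  · exact add_pos_of_nonneg_of_pos hAx <|
      hBx.lt_of_ne fun hBx' => hx (h x hAx'.symm hBx'.symm)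

theorem PosDef.dotProduct_conjTranspose_mul_mul_same_eq_zero_iff [Fintype m] [CommRing R]
    [PartialOrder R] [StarRing R] {A : Matrix m m R} (hA : A.PosDef) (B : Matrix m n R)
    (x : n → R) : star x ⬝ᵥ ((Bᴴ * A * B) *ᵥ x) = 0 ↔ B *ᵥ x = 0 := by
  rw [show star x ⬝ᵥ ((Bᴴ * A * B) *ᵥ x) = star (B *ᵥ x) ⬝ᵥ (A *ᵥ (B *ᵥ x)) by
    simp only [star_mulVec, dotProduct_mulVec, vecMul_vecMul]]
  refine ⟨fun h => ?_, fun h => by rw [h, mulVec_zero, dotProduct_zero]⟩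
  by_contra hBx
  exact (hA.dotProduct_mulVec_pos hBx).ne' h

theorem mulVec_injective_of_rank_eq_card {K : Type*} [Field K] [Fintype m] (A : Matrix m n K)
    (hA : A.rank = Fintype.card n) : Function.Injective A.mulVec := by
  have hker := LinearMap.finrank_range_add_finrank_ker A.mulVecLin
  rw [← rank, hA, Module.finrank_fintype_fun_eq_card, add_eq_left,
    Submodule.finrank_eq_zero] at hker
  exact LinearMap.ker_eq_bot.mp hker

end Matrix

/-- The Schur complement `−μP − (I−P)T(H + μ⁻¹ Tᵀ(I−P)T)⁻¹ Tᵀ(I−P)` is negative definite,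
i.e. its negation `μP + (I−P)T(H + μ⁻¹ Tᵀ(I−P)T)⁻¹ Tᵀ(I−P)` is positive definite. -/
theorem schur_complement_negdef {n m : ℕ} (μ : ℝ) (hμ : 0 < μ)
    (H : Matrix (Fin n) (Fin n) ℝ) (P : Matrix (Fin m) (Fin m) ℝ)
    (T : Matrix (Fin m) (Fin n) ℝ)
    (hH : H.PosDef) (hP : P.PosSemidef) (hIP : (1 - P).PosSemidef)
    (hT : T.rank = m) :
    Matrix.PosDef
      (μ • P + (1 - P) * T * (H + μ⁻¹ • (Tᵀ * (1 - P) * T))⁻¹ * Tᵀ * (1 - P)) := by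
  set M := H + μ⁻¹ • (Tᵀ * (1 - P) * T)
  set Q := Tᵀ * (1 - P)
  have hM : M.PosDef := hH.add_posSemidef <| by
    simpa [conjTranspose_eq_transpose_of_trivial] using
      (hIP.conjTranspose_mul_mul_same T).smul (inv_nonneg.mpr hμ.le)
  have hQ : (1 - P) * T * M⁻¹ * Tᵀ * (1 - P) = Qᴴ * M⁻¹ * Q := by
    rw [conjTranspose_mul, hIP.isHermitian.eq, conjTranspose_eq_transpose_of_trivial,
      transpose_transpose]
    simp only [Q, Matrix.mul_assoc]
  have hTinj : Function.Injective Tᵀ.mulVec :=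
    Tᵀ.mulVec_injective_of_rank_eq_card (by rw [rank_transpose, hT, Fintype.card_fin])
  rw [hQ]
  refine (hP.smul hμ.le).posDef_add (hM.inv.posSemidef.conjTranspose_mul_mul_same Q)
    fun x hPx hQx => ?_
  -- On `ker P`, `Q` acts as `Tᵀ`, which is injective.
  rw [smul_mulVec, dotProduct_smul, smul_eq_mul, mul_eq_zero, or_iff_right hμ.ne',
    hP.dotProduct_mulVec_zero_iff] at hPx
  rw [hM.inv.dotProduct_conjTranspose_mul_mul_same_eq_zero_iff, ← mulVec_mulVec, sub_mulVec,
    one_mulVec, hPx, sub_zero] at hQx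
  exact hTinj.eq_iff' (mulVec_zero _) |>.mp hQx
end

section
/- Let g: ℝ^m → ℝ be a proper, lower semicontinuous, convex function and μ > 0, and let prox_{μg} denote its proximal operator. Then for any a, b ∈ ℝ^m there exists a symmetric matrix D with 0 ⪯ D ⪯ I such that prox_{μg}(a) − prox_{μg}(b) = D(a − b). -/
/-!
Testing the minimality of `prox v` along the segment towards any `z` and letting the step tend
to `0` gives the optimality condition `(1/μ) ⟪v - prox v, z - prox v⟫ ≤ g z - g (prox v)`. Adding
it for `(a, prox b)` and `(b, prox a)` yields firm nonexpansiveness `‖u‖² ≤ ⟪u, w⟫` for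
`u = prox a - prox b`, `w = a - b`, and then `D = u uᵀ / ⟪u, w⟫` works: it maps `w` to `u`, and
Cauchy–Schwarz with `‖u‖² ≤ ⟪u, w⟫` gives `D ⪯ I`.
-/

open Matrix Set Filter Topology
open scoped InnerProductSpace

section Prox

variable {E : Type*} [NormedAddCommGroup E] [InnerProductSpace ℝ E]

theorem ConvexOn.two_mul_inner_le_of_isMinOn_add_sq_norm {g : E → ℝ}
    (hg : ConvexOn ℝ univ g) {c : ℝ} {v p : E}
    (hp : IsMinOn (fun z => g z + c * ‖z - v‖ ^ 2) univ p) (z : E) :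
    2 * c * ⟪v - p, z - p⟫_ℝ ≤ g z - g p := by
  have along_segment : ∀ t ∈ Ioo (0 : ℝ) 1,
      2 * c * ⟪v - p, z - p⟫_ℝ ≤ g z - g p + c * t * ‖z - p‖ ^ 2 := by
    rintro t ⟨ht0, ht1⟩
    have hmin : g p + c * ‖p - v‖ ^ 2 ≤ g (p + t • (z - p)) + c * ‖p + t • (z - p) - v‖ ^ 2 :=
      hp (mem_univ _)
    have hconv : g (p + t • (z - p)) ≤ (1 - t) * g p + t * g z := by
      have := hg.2 (mem_univ p) (mem_univ z) (by linarith : (0 : ℝ) ≤ 1 - t) ht0.le (by ring)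
      rwa [show (1 - t) • p + t • z = p + t • (z - p) by module] at this
    have hexpand : ‖p + t • (z - p) - v‖ ^ 2
        = ‖p - v‖ ^ 2 - 2 * t * ⟪v - p, z - p⟫_ℝ + t ^ 2 * ‖z - p‖ ^ 2 := by
      rw [show p + t • (z - p) - v = (p - v) + t • (z - p) by abel, norm_add_sq_real,
        real_inner_smul_right, norm_smul, mul_pow, Real.norm_eq_abs, sq_abs,
        ← neg_sub v p, inner_neg_left]
      ring
    rw [hexpand] at hmin
    refine le_of_mul_le_mul_left ?_ ht0
    nlinarith
  have hlim : Tendsto (fun t => g z - g p + c * t * ‖z - p‖ ^ 2) (𝓝[>] 0)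
      (𝓝 (g z - g p)) := by
    have : Continuous fun t : ℝ => g z - g p + c * t * ‖z - p‖ ^ 2 := by fun_prop
    simpa using this.continuousWithinAt.tendsto (x := 0) (s := Ioi 0)
  exact ge_of_tendsto hlim (eventually_of_mem (Ioo_mem_nhdsGT one_pos) along_segment)

theorem ConvexOn.sq_norm_sub_le_inner_of_isMinOn_add_sq_norm {g : E → ℝ}
    (hg : ConvexOn ℝ univ g) {c : ℝ} (hc : 0 < c) {prox : E → E}
    (hprox : ∀ v, IsMinOn (fun z => g z + c * ‖z - v‖ ^ 2) univ (prox v)) (a b : E) :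
    ‖prox a - prox b‖ ^ 2 ≤ ⟪prox a - prox b, a - b⟫_ℝ := by
  have ha := hg.two_mul_inner_le_of_isMinOn_add_sq_norm (hprox a) (prox b)
  have hb := hg.two_mul_inner_le_of_isMinOn_add_sq_norm (hprox b) (prox a)
  have hsum : ⟪a - prox a, prox b - prox a⟫_ℝ + ⟪b - prox b, prox a - prox b⟫_ℝ
      = ‖prox a - prox b‖ ^ 2 - ⟪prox a - prox b, a - b⟫_ℝ := by
    rw [← real_inner_self_eq_norm_sq]
    simp only [inner_sub_left, inner_sub_right, real_inner_comm]
    ring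
  have : c * (‖prox a - prox b‖ ^ 2 - ⟪prox a - prox b, a - b⟫_ℝ) ≤ 0 := by
    rw [← hsum]; linarith
  exact sub_nonpos.1 (nonpos_of_mul_nonpos_right this hc)

end Prox

theorem Matrix.exists_isSymm_posSemidef_one_sub_posSemidef_mulVec_eq {n : Type*} [Fintype n]
    [DecidableEq n] {u w : n → ℝ} (h : u ⬝ᵥ u ≤ u ⬝ᵥ w) :
    ∃ D : Matrix n n ℝ, D.IsSymm ∧ D.PosSemidef ∧ (1 - D).PosSemidef ∧ u = D *ᵥ w := by
  set T := u ⬝ᵥ w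
  -- If `T = 0` then `u = 0`, and the junk value `0⁻¹ = 0` makes `D = 0`.
  have hT : 0 ≤ T := (dotProduct_self_star_nonneg u).trans h
  have hD : (T⁻¹ • vecMulVec u u).PosSemidef :=
    (posSemidef_vecMulVec_self_star u).smul (inv_nonneg.2 hT)
  refine ⟨T⁻¹ • vecMulVec u u, hD.isHermitian, hD, ?_, ?_⟩
  · refine posSemidef_iff_dotProduct_mulVec.2 ⟨isHermitian_one.sub hD.isHermitian, fun x => ?_⟩
    have hcs := real_inner_mul_inner_self_le (WithLp.toLp 2 u) (WithLp.toLp 2 x)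
    simp only [EuclideanSpace.inner_toLp_toLp, star_trivial] at hcs
    have hx : 0 ≤ x ⬝ᵥ x := dotProduct_self_star_nonneg x
    have hquad : T⁻¹ * (x ⬝ᵥ u * x ⬝ᵥ u) ≤ x ⬝ᵥ x :=
      calc T⁻¹ * (x ⬝ᵥ u * x ⬝ᵥ u) ≤ T⁻¹ * (T * x ⬝ᵥ x) :=
            mul_le_mul_of_nonneg_left (hcs.trans (mul_le_mul_of_nonneg_right h hx))
              (inv_nonneg.2 hT)
        _ ≤ x ⬝ᵥ x := by
          rw [← mul_assoc]
          exact mul_le_of_le_one_left hx (inv_mul_le_one_of_le₀ le_rfl hT)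
    simp only [star_trivial, sub_mulVec, one_mulVec, smul_mulVec, vecMulVec_mulVec,
      op_smul_eq_smul, dotProduct_sub, dotProduct_smul, smul_eq_mul]
    rw [dotProduct_comm u x]
    linarith
  · rcases hT.eq_or_lt with hT0 | hT0
    · have hu : u = 0 :=
        dotProduct_self_eq_zero.1 (le_antisymm (hT0 ▸ h) (dotProduct_self_star_nonneg u))
      simp [hu]
    · rw [smul_mulVec, vecMulVec_mulVec, op_smul_eq_smul, smul_smul, inv_mul_cancel₀ hT0.ne',
        one_smul]

theorem prox_difference_matrix_general {m : ℕ} (μ : ℝ) (hμ : 0 < μ)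
    (g : EuclideanSpace ℝ (Fin m) → ℝ)
    (hg : ConvexOn ℝ Set.univ g)
    (prox : EuclideanSpace ℝ (Fin m) → EuclideanSpace ℝ (Fin m))
    (hprox : ∀ v, IsMinOn (fun z => g z + (1 / (2 * μ)) * ‖z - v‖ ^ 2) Set.univ (prox v))
    (a b : EuclideanSpace ℝ (Fin m)) :
    ∃ D : Matrix (Fin m) (Fin m) ℝ, D.IsSymm ∧ D.PosSemidef ∧ (1 - D).PosSemidef ∧
      (prox a - prox b : Fin m → ℝ) = D.mulVec (a - b) := by
  have hfirm := hg.sq_norm_sub_le_inner_of_isMinOn_add_sq_norm (by positivity) hprox a b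
  rw [← real_inner_self_eq_norm_sq, EuclideanSpace.inner_eq_star_dotProduct,
    EuclideanSpace.inner_eq_star_dotProduct, star_trivial, dotProduct_comm (a - b).ofLp] at hfirm
  exact exists_isSymm_posSemidef_one_sub_posSemidef_mulVec_eq hfirm

/-- For a proper lsc convex `g` with proximal operator `prox`, and any `a, b`, there exists a
symmetric matrix `D` with `0 ⪯ D ⪯ I` such that `prox a − prox b = D (a − b)`. -/
theorem prox_difference_matrix {m : ℕ} (μ : ℝ) (hμ : 0 < μ)
    (g : EuclideanSpace ℝ (Fin m) → ℝ)
    (hg : ConvexOn ℝ Set.univ g) (hlsc : LowerSemicontinuous g)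
    (prox : EuclideanSpace ℝ (Fin m) → EuclideanSpace ℝ (Fin m))
    (hprox : ∀ v, IsMinOn (fun z => g z + (1 / (2 * μ)) * ‖z - v‖ ^ 2) Set.univ (prox v))
    (a b : EuclideanSpace ℝ (Fin m)) :
    ∃ D : Matrix (Fin m) (Fin m) ℝ, D.IsSymm ∧ D.PosSemidef ∧ (1 - D).PosSemidef ∧
      (prox a - prox b : Fin m → ℝ) = D.mulVec (a - b) :=
  prox_difference_matrix_general μ hμ g hg prox hprox a b
end

section
/- Let f: ℝ^n → ℝ be m_f-strongly convex with L_f-Lipschitz continuous gradient. Then for any a, b ∈ ℝ^n there exists a symmetric matrix G with m_f I ⪯ G ⪯ L_f I such that ∇f(a) − ∇f(b) = G(a − b). -/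
/-!
Put `g = f - (m_f / 2) ‖·‖²`. It is convex, and the Lipschitz bound on `∇f` gives
`⟪∇g x - ∇g y, x - y⟫ ≤ (L_f - m_f) ‖x - y‖²`, hence the descent lemma for `g`. Comparing the
convexity lower bound at `y` with the descent upper bound at `x`, both evaluated at
`x - t (∇g x - ∇g y)`, and optimising over `t` gives the Baillon–Haddad co-coercivity
`‖e‖² ≤ (L_f - m_f) ⟪e, c⟫` for `e = ∇g a - ∇g b`, `c = a - b`. Then
`G = m_f I + e eᵀ / ⟪e, c⟫` sends `c` to `∇f a - ∇f b`, and Cauchy–Schwarz together with the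
co-coercivity shows `(L_f - m_f) I - e eᵀ / ⟪e, c⟫ ⪰ 0`.
-/

open Matrix
open scoped RealInnerProductSpace

section Gradient

variable {E : Type*} [NormedAddCommGroup E] [InnerProductSpace ℝ E]

theorem inner_sub_smul_sub_sub_smul (a b x y : E) (c : ℝ) :
    ⟪(a - c • x) - (b - c • y), x - y⟫ = ⟪a - b, x - y⟫ - c * ‖x - y‖ ^ 2 := by
  rw [show (a - c • x) - (b - c • y) = (a - b) - c • (x - y) by module, inner_sub_left,
    real_inner_smul_left, real_inner_self_eq_norm_sq]

variable [CompleteSpace E] {g : E → ℝ} {g' : E → E}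

theorem HasGradientAt.sub_half_mul_norm_sq {x w : E} (hg : HasGradientAt g w x) (c : ℝ) :
    HasGradientAt (fun y => g y - c / 2 * ‖y‖ ^ 2) (w - c • x) x := by
  rw [hasGradientAt_iff_hasFDerivAt] at hg ⊢
  have hsq : HasFDerivAt (fun y : E => c / 2 * ‖y‖ ^ 2)
      (InnerProductSpace.toDual ℝ E (c • x)) x := by
    refine ((hasStrictFDerivAt_norm_sq x).hasFDerivAt.const_mul (c / 2)).congr_fderiv ?_
    ext v
    simp only [_root_.smul_apply, coe_innerSL_apply, nsmul_eq_mul, Nat.cast_ofNat, smul_eq_mul,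
      map_smul, InnerProductSpace.toDual_apply_apply]
    ring
  rw [map_sub]
  exact hg.sub hsq

theorem HasGradientAt.hasDerivAt_comp_add_smul {x v w : E} {t : ℝ}
    (hg : HasGradientAt g w (x + t • v)) :
    HasDerivAt (fun s : ℝ => g (x + s • v)) ⟪w, v⟫ t := by
  have hline : HasDerivAt (fun s : ℝ => x + s • v) v t := by
    simpa using ((hasDerivAt_id t).smul_const v).const_add x
  have h := hg.hasFDerivAt.comp_hasDerivAt t hline
  simp only [InnerProductSpace.toDual_apply_apply] at h
  exact h

theorem ConvexOn.add_inner_sub_le {x w : E} (hconv : ConvexOn ℝ Set.univ g)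
    (hg : HasGradientAt g w x) (y : E) : g x + ⟪w, y - x⟫ ≤ g y := by
  have hline : ConvexOn ℝ Set.univ (fun t : ℝ => g (x + t • (y - x))) := by
    simpa [Function.comp_def, AffineMap.lineMap_apply, add_comm] using
      hconv.comp_affineMap (AffineMap.lineMap x y)
  have hd := (show HasGradientAt g w (x + (0 : ℝ) • (y - x)) by
    simpa using hg).hasDerivAt_comp_add_smul
  have hslope := hline.le_slope_of_hasDerivAt (Set.mem_univ 0) (Set.mem_univ 1) one_pos hd
  simp only [slope_def_field, one_smul, add_sub_cancel, zero_smul, add_zero, sub_zero, div_one]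
    at hslope
  linarith

theorem le_add_inner_sub_of_inner_gradient_sub_nonpos (hg : ∀ x, HasGradientAt g (g' x) x)
    (hanti : ∀ x y, ⟪g' x - g' y, x - y⟫ ≤ 0) (x y : E) : g y ≤ g x + ⟪g' x, y - x⟫ := by
  set v := y - x
  set φ : ℝ → ℝ := fun t => g (x + t • v) - t * ⟪g' x, v⟫
  have hφ : ∀ t, HasDerivAt φ ⟪g' (x + t • v) - g' x, v⟫ t := fun t =>
    ((hg _).hasDerivAt_comp_add_smul.sub (hasDerivAt_mul_const _)).congr_deriv
      (inner_sub_left _ _ _).symm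
  have hφ_anti : AntitoneOn φ (Set.Icc 0 1) := by
    refine antitoneOn_of_deriv_nonpos (convex_Icc 0 1)
      (fun t _ => (hφ t).continuousAt.continuousWithinAt)
      (fun t _ => (hφ t).differentiableAt.differentiableWithinAt) fun t ht => ?_
    rw [interior_Icc] at ht
    have h := hanti (x + t • v) x
    rw [add_sub_cancel_left, inner_smul_right] at h
    rw [(hφ t).deriv]
    exact nonpos_of_mul_nonpos_right h ht.1
  have h01 := hφ_anti ⟨le_rfl, zero_le_one⟩ ⟨zero_le_one, le_rfl⟩ zero_le_one
  simp only [φ, v, zero_smul, add_zero, zero_mul, sub_zero, one_smul, one_mul,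
    add_sub_cancel] at h01
  linarith

theorem le_add_inner_sub_add_of_inner_gradient_sub_le {L : ℝ}
    (hg : ∀ x, HasGradientAt g (g' x) x) (hL : ∀ x y, ⟪g' x - g' y, x - y⟫ ≤ L * ‖x - y‖ ^ 2)
    (x y : E) : g y ≤ g x + ⟪g' x, y - x⟫ + L / 2 * ‖y - x‖ ^ 2 := by
  have h := le_add_inner_sub_of_inner_gradient_sub_nonpos
    (fun z => (hg z).sub_half_mul_norm_sq L)
    (fun z w => by rw [inner_sub_smul_sub_sub_smul]; linarith [hL z w]) x y
  rw [inner_sub_left, real_inner_smul_left, inner_sub_right x y x, real_inner_self_eq_norm_sq]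
    at h
  rw [norm_sub_sq_real, real_inner_comm x y]
  linarith

theorem ConvexOn.add_inner_sub_add_mul_norm_sq_le {L : ℝ} (hconv : ConvexOn ℝ Set.univ g)
    (hg : ∀ x, HasGradientAt g (g' x) x) (hL : ∀ x y, ⟪g' x - g' y, x - y⟫ ≤ L * ‖x - y‖ ^ 2)
    (x y : E) (t : ℝ) :
    g y + ⟪g' y, x - y⟫ + (t - L * t ^ 2 / 2) * ‖g' x - g' y‖ ^ 2 ≤ g x := by
  set u := g' x - g' y
  have hlow := hconv.add_inner_sub_le (hg y) (x - t • u)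
  have hup := le_add_inner_sub_add_of_inner_gradient_sub_le hg hL x (x - t • u)
  have huu : ⟪u, u⟫ = ‖u‖ ^ 2 := real_inner_self_eq_norm_sq u
  rw [show x - t • u - y = (x - y) - t • u by abel, inner_sub_right, real_inner_smul_right]
    at hlow
  rw [sub_sub_cancel_left, inner_neg_right, real_inner_smul_right, norm_neg, norm_smul,
    Real.norm_eq_abs, mul_pow, sq_abs] at hup
  rw [inner_sub_left] at huu
  rw [show ⟪g' y, u⟫ = ⟪g' x, u⟫ - ‖u‖ ^ 2 by linarith] at hlow
  linarith

theorem le_mul_of_forall_two_mul_sub_mul_sq_mul_le {L N S : ℝ} (hL : 0 ≤ L)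
    (h : ∀ t, (2 * t - L * t ^ 2) * N ≤ S) : N ≤ L * S := by
  rcases hL.lt_or_eq with hL | rfl
  · have := h L⁻¹
    field_simp at this
    nlinarith
  · rw [zero_mul]
    by_contra! hN
    have h2tN : (2 * ((S + 1) / (2 * N)) - 0 * ((S + 1) / (2 * N)) ^ 2) * N = S + 1 := by
      field_simp
      ring
    linarith [h ((S + 1) / (2 * N))]

theorem ConvexOn.norm_sq_gradient_sub_le {L : ℝ} (hconv : ConvexOn ℝ Set.univ g)
    (hg : ∀ x, HasGradientAt g (g' x) x) (hL₀ : 0 ≤ L)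
    (hL : ∀ x y, ⟪g' x - g' y, x - y⟫ ≤ L * ‖x - y‖ ^ 2) (x y : E) :
    ‖g' x - g' y‖ ^ 2 ≤ L * ⟪g' x - g' y, x - y⟫ := by
  refine le_mul_of_forall_two_mul_sub_mul_sq_mul_le hL₀ fun t => ?_
  have hxy := hconv.add_inner_sub_add_mul_norm_sq_le hg hL x y t
  have hyx := hconv.add_inner_sub_add_mul_norm_sq_le hg hL y x t
  rw [norm_sub_rev, ← neg_sub x y, inner_neg_right] at hyx
  rw [inner_sub_left]
  linarith

end Gradient

namespace Matrix

variable {ι : Type*} [Fintype ι]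

theorem dotProduct_mul_dotProduct_le (e x : ι → ℝ) :
    (e ⬝ᵥ x) * (e ⬝ᵥ x) ≤ (e ⬝ᵥ e) * (x ⬝ᵥ x) := by
  simpa only [EuclideanSpace.inner_toLp_toLp, star_trivial, dotProduct_comm x e] using
    real_inner_mul_inner_self_le (WithLp.toLp 2 e) (WithLp.toLp 2 x)

variable [DecidableEq ι]

theorem posSemidef_smul_one_sub_inv_smul_vecMulVec {κ s : ℝ} (hκ : 0 ≤ κ) (hs : 0 ≤ s)
    {e : ι → ℝ} (he : e ⬝ᵥ e ≤ κ * s) : (κ • 1 - s⁻¹ • vecMulVec e e).PosSemidef := by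
  have hrank : (vecMulVec e e).PosSemidef := by simpa using posSemidef_vecMulVec_self_star e
  refine .of_dotProduct_mulVec_nonneg
    ((PosSemidef.one.smul hκ).isHermitian.sub (hrank.smul (inv_nonneg.2 hs)).isHermitian)
    fun x => ?_
  simp only [sub_mulVec, smul_mulVec, one_mulVec, vecMulVec_mulVec, star_trivial, dotProduct_sub,
    dotProduct_smul, op_smul_eq_smul, smul_eq_mul, dotProduct_comm x e]
  have hxx : 0 ≤ x ⬝ᵥ x := by simpa using dotProduct_self_star_nonneg x
  rcases hs.eq_or_lt with rfl | hs
  · simpa using mul_nonneg hκ hxx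
  · have hcs : e ⬝ᵥ x * e ⬝ᵥ x ≤ κ * s * x ⬝ᵥ x :=
      (dotProduct_mul_dotProduct_le e x).trans (mul_le_mul_of_nonneg_right he hxx)
    rw [sub_nonneg, inv_mul_le_iff₀ hs]
    linarith

theorem exists_isSymm_mulVec_eq {m L : ℝ} (hmL : m ≤ L) {c d : ι → ℝ}
    (h : (d - m • c) ⬝ᵥ (d - m • c) ≤ (L - m) * ((d - m • c) ⬝ᵥ c)) :
    ∃ G : Matrix ι ι ℝ, G.IsSymm ∧ (G - m • 1).PosSemidef ∧ (L • 1 - G).PosSemidef ∧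
      d = G *ᵥ c := by
  set e := d - m • c
  set s := e ⬝ᵥ c
  have he : s ≤ 0 → e = 0 := fun hs => dotProduct_self_eq_zero.1 <| le_antisymm
    (h.trans (mul_nonpos_of_nonneg_of_nonpos (sub_nonneg.2 hmL) hs))
    (by simpa using dotProduct_self_star_nonneg e)
  have hs : 0 ≤ s := by
    by_contra! hs
    simp [s, he hs.le] at hs
  -- When `e = 0` we have `s⁻¹ = 0⁻¹ = 0`, so this is `m • 1` without a case split.
  refine ⟨m • 1 + s⁻¹ • vecMulVec e e, ?_, ?_, ?_, ?_⟩
  · simp [IsSymm, transpose_add, transpose_smul]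
  · rw [add_sub_cancel_left]
    exact (by simpa using posSemidef_vecMulVec_self_star e : (vecMulVec e e).PosSemidef).smul
      (inv_nonneg.2 hs)
  · rw [show L • (1 : Matrix ι ι ℝ) - (m • 1 + s⁻¹ • vecMulVec e e)
      = (L - m) • 1 - s⁻¹ • vecMulVec e e by module]
    exact posSemidef_smul_one_sub_inv_smul_vecMulVec (sub_nonneg.2 hmL) hs h
  · rw [add_mulVec, smul_mulVec, one_mulVec, smul_mulVec, vecMulVec_mulVec, op_smul_eq_smul,
      smul_smul]
    rcases hs.eq_or_lt with hs0 | hs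
    · simp [← hs0, show d = m • c from sub_eq_zero.1 (he hs0.ge)]
    · rw [inv_mul_cancel₀ hs.ne', one_smul, add_sub_cancel]

end Matrix

theorem grad_difference_matrix_general {n : ℕ} (mf Lf : ℝ) (hLf : mf ≤ Lf)
    (f : EuclideanSpace ℝ (Fin n) → ℝ)
    (f' : EuclideanSpace ℝ (Fin n) → EuclideanSpace ℝ (Fin n))
    (hf' : ∀ x, HasGradientAt f (f' x) x)
    (hsc : ConvexOn ℝ Set.univ (fun x => f x - mf / 2 * ‖x‖ ^ 2))
    (hlip : ∀ a b, ‖f' a - f' b‖ ≤ Lf * ‖a - b‖)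
    (a b : EuclideanSpace ℝ (Fin n)) :
    ∃ G : Matrix (Fin n) (Fin n) ℝ, G.IsSymm ∧ (G - mf • 1).PosSemidef ∧
      (Lf • (1 : Matrix (Fin n) (Fin n) ℝ) - G).PosSemidef ∧
      (f' a - f' b : Fin n → ℝ) = G.mulVec (a - b) := by
  have hbound (x y : EuclideanSpace ℝ (Fin n)) :
      ⟪(f' x - mf • x) - (f' y - mf • y), x - y⟫ ≤ (Lf - mf) * ‖x - y‖ ^ 2 := by
    rw [inner_sub_smul_sub_sub_smul]
    nlinarith [real_inner_le_norm (f' x - f' y) (x - y),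
      mul_le_mul_of_nonneg_right (hlip x y) (norm_nonneg (x - y))]
  have hcoco := hsc.norm_sq_gradient_sub_le (fun x => (hf' x).sub_half_mul_norm_sq mf)
    (sub_nonneg.2 hLf) hbound a b
  refine exists_isSymm_mulVec_eq hLf ?_
  rw [show f' a - mf • a - (f' b - mf • b) = (f' a - f' b) - mf • (a - b) by module,
    ← real_inner_self_eq_norm_sq, EuclideanSpace.inner_eq_star_dotProduct,
    EuclideanSpace.inner_eq_star_dotProduct, dotProduct_comm (WithLp.ofLp (a - b))] at hcoco
  simpa only [WithLp.ofLp_sub, WithLp.ofLp_smul, star_trivial] using hcoco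

/-- For `f` strongly convex with parameter `m_f` and `L_f`-Lipschitz gradient `f'`, for any
`a, b` there exists a symmetric matrix `G` with `m_f I ⪯ G ⪯ L_f I` such that
`f' a − f' b = G (a − b)`. -/
theorem grad_difference_matrix {n : ℕ} (mf Lf : ℝ) (hmf : 0 < mf) (hLf : mf ≤ Lf)
    (f : EuclideanSpace ℝ (Fin n) → ℝ)
    (f' : EuclideanSpace ℝ (Fin n) → EuclideanSpace ℝ (Fin n))
    (hf' : ∀ x, HasGradientAt f (f' x) x)
    (hsc : ConvexOn ℝ Set.univ (fun x => f x - mf / 2 * ‖x‖ ^ 2))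
    (hlip : ∀ a b, ‖f' a - f' b‖ ≤ Lf * ‖a - b‖)
    (a b : EuclideanSpace ℝ (Fin n)) :
    ∃ G : Matrix (Fin n) (Fin n) ℝ, G.IsSymm ∧ (G - mf • 1).PosSemidef ∧
      (Lf • (1 : Matrix (Fin n) (Fin n) ℝ) - G).PosSemidef ∧
      (f' a - f' b : Fin n → ℝ) = G.mulVec (a - b) :=
  grad_difference_matrix_general mf Lf hLf f f' hf' hsc hlip a b
end

section
/- Let f be twice continuously differentiable and convex, g proper lsc convex, μ > 0. The proximal augmented Lagrangian L_μ(x;y) = f(x) + M_{μg}(Tx + μy) − (μ/2)‖y‖² is continuously differentiable with ∇_x L_μ = ∇f(x) + Tᵀ∇M_{μg}(Tx + μy) and ∇_y L_μ = μ∇M_{μg}(Tx + μy) − μy, and ∇L_μ is Lipschitz continuous whenever ∇f is Lipschitz. -/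
open Matrix
/-- Matrix–vector multiplication, viewed as a map between Euclidean spaces. -/
noncomputable def mulVecE {n m : ℕ} (T : Matrix (Fin m) (Fin n) ℝ)
    (x : EuclideanSpace ℝ (Fin n)) : EuclideanSpace ℝ (Fin m) :=
  WithLp.toLp 2 (T.mulVec x)

/-- The Moreau envelope `M_{μg}(v) = g (prox v) + (1/(2μ))‖prox v − v‖²` expressed
through the proximal operator. -/
noncomputable def MoreauEnv {m : ℕ} (μ : ℝ) (g : EuclideanSpace ℝ (Fin m) → ℝ)
    (prox : EuclideanSpace ℝ (Fin m) → EuclideanSpace ℝ (Fin m))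
    (v : EuclideanSpace ℝ (Fin m)) : ℝ :=
  g (prox v) + (1 / (2 * μ)) * ‖prox v - v‖ ^ 2

/-- The gradient `∇M_{μg}(v) = (1/μ)(v − prox v)` of the Moreau envelope. -/
noncomputable def gradMoreau {m : ℕ} (μ : ℝ)
    (prox : EuclideanSpace ℝ (Fin m) → EuclideanSpace ℝ (Fin m))
    (v : EuclideanSpace ℝ (Fin m)) : EuclideanSpace ℝ (Fin m) :=
  (1 / μ) • (v - prox v)

/-!
The proximal point `p = prox v` satisfies the variational inequality
`⟪v - p, z - p⟫ ≤ μ (g z - g p)`: compare `p` with the points `p + t (z - p)` of the segment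
towards `z`, use convexity of `g`, divide by `t` and let `t → 0`. Adding this inequality at two
points shows that `prox` is firmly nonexpansive, hence `id - prox` is monotone and
nonexpansive. Minimality of `prox w` bounds the Moreau envelope `M` above by its first-order
expansion at `v` plus `‖w - v‖² / (2μ)`; the same bound with `v` and `w` exchanged, together with
monotonicity of `id - prox`, gives the matching lower bound. So `M` is differentiable with the
`(1/μ)`-Lipschitz gradient `(v - prox v) / μ`, and the partial gradients of `L_μ` follow by the
chain rule, `Tᵀ` being the adjoint of `T`.
-/

open Set Filter Topology InnerProductSpace
open scoped RealInnerProductSpace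

lemma le_of_forall_mem_Ioc_le_add_mul {a b c : ℝ}
    (h : ∀ t ∈ Ioc (0 : ℝ) 1, a ≤ b + t * c) : a ≤ b := by
  have hlim : Tendsto (fun t : ℝ => b + t * c) (𝓝[>] 0) (𝓝 b) := by
    have : Tendsto (fun t : ℝ => b + t * c) (𝓝 0) (𝓝 (b + 0 * c)) :=
      (continuous_const.add (continuous_id.mul continuous_const)).tendsto 0
    simpa using this.mono_left nhdsWithin_le_nhds
  exact ge_of_tendsto hlim (eventually_of_mem (Ioc_mem_nhdsGT one_pos) h)

section Prox

variable {E : Type*} [NormedAddCommGroup E] [InnerProductSpace ℝ E]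

def IsProximalMap (μ : ℝ) (g : E → ℝ) (prox : E → E) : Prop :=
  ∀ v, IsMinOn (fun z => g z + (1 / (2 * μ)) * ‖z - v‖ ^ 2) univ (prox v)

variable {μ : ℝ} {g : E → ℝ} {prox : E → E}

namespace IsProximalMap

theorem inner_sub_le (hp : IsProximalMap μ g prox) (hμ : 0 < μ) (hg : ConvexOn ℝ univ g)
    (v z : E) : ⟪v - prox v, z - prox v⟫_ℝ ≤ μ * (g z - g (prox v)) := by
  set p := prox v
  suffices 0 ≤ μ * (g z - g p) + ⟪p - v, z - p⟫_ℝ by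
    rw [← neg_sub p v, inner_neg_left]; linarith
  refine le_of_forall_mem_Ioc_le_add_mul (c := ‖z - p‖ ^ 2 / 2) fun t ⟨ht0, ht1⟩ => ?_
  have hmin : g p + 1 / (2 * μ) * ‖p - v‖ ^ 2 ≤
      g ((1 - t) • p + t • z) + 1 / (2 * μ) * ‖(1 - t) • p + t • z - v‖ ^ 2 :=
    hp v (mem_univ _)
  have hconv : g ((1 - t) • p + t • z) ≤ (1 - t) * g p + t * g z :=
    hg.2 (mem_univ p) (mem_univ z) (by linarith) ht0.le (by ring)
  have hexpand : ‖(1 - t) • p + t • z - v‖ ^ 2 =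
      ‖p - v‖ ^ 2 + 2 * t * ⟪p - v, z - p⟫_ℝ + t ^ 2 * ‖z - p‖ ^ 2 := by
    rw [show (1 - t) • p + t • z - v = (p - v) + t • (z - p) by module, norm_add_sq_real,
      real_inner_smul_right, norm_smul, Real.norm_eq_abs, mul_pow, sq_abs]
    ring
  rw [hexpand] at hmin
  have hfactor :
      t * (g z - g p) + 1 / (2 * μ) * (2 * t * ⟪p - v, z - p⟫_ℝ + t ^ 2 * ‖z - p‖ ^ 2)
        = t / μ * (μ * (g z - g p) + ⟪p - v, z - p⟫_ℝ + t * (‖z - p‖ ^ 2 / 2)) := by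
    field_simp
    ring
  exact (mul_nonneg_iff_of_pos_left (div_pos ht0 hμ)).1 (hfactor ▸ by linarith)

theorem inner_sub_sub_nonneg (hp : IsProximalMap μ g prox) (hμ : 0 < μ)
    (hg : ConvexOn ℝ univ g) (v w : E) :
    0 ≤ ⟪(w - prox w) - (v - prox v), prox w - prox v⟫_ℝ := by
  have hv := hp.inner_sub_le hμ hg v (prox w)
  have hw := hp.inner_sub_le hμ hg w (prox v)
  rw [← neg_sub (prox w) (prox v), inner_neg_right] at hw
  rw [inner_sub_left]
  linarith

theorem inner_sub_sub_sub_nonneg (hp : IsProximalMap μ g prox) (hμ : 0 < μ)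
    (hg : ConvexOn ℝ univ g) (v w : E) :
    0 ≤ ⟪(w - prox w) - (v - prox v), w - v⟫_ℝ := by
  have hsplit : w - v = ((w - prox w) - (v - prox v)) + (prox w - prox v) := by abel
  rw [hsplit, inner_add_right, real_inner_self_eq_norm_sq]
  linarith [hp.inner_sub_sub_nonneg hμ hg v w, sq_nonneg ‖(w - prox w) - (v - prox v)‖]

theorem norm_sub_sub_le (hp : IsProximalMap μ g prox) (hμ : 0 < μ)
    (hg : ConvexOn ℝ univ g) (v w : E) :
    ‖(w - prox w) - (v - prox v)‖ ≤ ‖w - v‖ := by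
  have hsplit : w - v = ((w - prox w) - (v - prox v)) + (prox w - prox v) := by abel
  set d := (w - prox w) - (v - prox v)
  have hsq : ‖d‖ ^ 2 ≤ ‖d‖ * ‖w - v‖ :=
    calc ‖d‖ ^ 2 ≤ ⟪d, w - v⟫_ℝ := by
          rw [hsplit, inner_add_right, real_inner_self_eq_norm_sq]
          linarith [hp.inner_sub_sub_nonneg hμ hg v w]
      _ ≤ ‖d‖ * ‖w - v‖ := real_inner_le_norm d (w - v)
  nlinarith [norm_nonneg d, norm_nonneg (w - v)]

end IsProximalMap

end Prox

lemma hasGradientAt_of_abs_sub_sub_inner_le {F : Type*} [NormedAddCommGroup F]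
    [InnerProductSpace ℝ F] [CompleteSpace F] {φ : F → ℝ} {G v : F} (C : ℝ)
    (h : ∀ w, |φ w - φ v - ⟪G, w - v⟫_ℝ| ≤ C * ‖w - v‖ ^ 2) :
    HasGradientAt φ G v := by
  rw [hasGradientAt_iff_isLittleO]
  have hquad : (fun w => ‖w - v‖ ^ 2) =o[𝓝 v] fun w => w - v :=
    (Asymptotics.isLittleO_norm_pow_id one_lt_two).comp_tendsto
      (tendsto_sub_nhds_zero_iff.2 tendsto_id)
  exact (Asymptotics.IsBigO.of_bound C (Eventually.of_forall fun w => by simpa using h w))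
    |>.trans_isLittleO hquad

theorem HasGradientAt.comp_of_inner_eq {E F : Type*} [NormedAddCommGroup E]
    [InnerProductSpace ℝ E] [CompleteSpace E] [NormedAddCommGroup F] [InnerProductSpace ℝ F]
    [CompleteSpace F] {φ : F → ℝ} {h : E → F} {G : F} {G' : E} {A : E →L[ℝ] F} {x : E}
    (hφ : HasGradientAt φ G (h x)) (hh : HasFDerivAt h A x)
    (hG : ∀ u, ⟪G, A u⟫_ℝ = ⟪G', u⟫_ℝ) : HasGradientAt (fun x => φ (h x)) G' x := by
  have hdual : toDual ℝ E G' = (toDual ℝ F G).comp A := by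
    ext u
    simp only [ContinuousLinearMap.comp_apply, toDual_apply_apply, hG]
  rw [hasGradientAt_iff_hasFDerivAt, hdual]
  exact hφ.hasFDerivAt.comp x hh

theorem continuous_of_hasGradientAt {F : Type*} [NormedAddCommGroup F] [InnerProductSpace ℝ F]
    [CompleteSpace F] {f : F → ℝ} {f' : F → F} (hf : ContDiff ℝ 1 f)
    (hf' : ∀ x, HasGradientAt f (f' x) x) : Continuous f' := by
  rw [← gradient_eq hf']
  exact (toDual ℝ F).symm.continuous.comp (hf.continuous_fderiv one_ne_zero)

theorem norm_sub_add_norm_sub_le_of_lipschitzWith {α β γ δ : Type*} [SeminormedAddCommGroup α]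
    [SeminormedAddCommGroup β] [SeminormedAddCommGroup γ] [SeminormedAddCommGroup δ]
    {F₁ : α × β → γ} {F₂ : α × β → δ} {K₁ K₂ : NNReal} (h₁ : LipschitzWith K₁ F₁)
    (h₂ : LipschitzWith K₂ F₂) (x₁ x₂ : α) (y₁ y₂ : β) :
    ‖F₁ (x₁, y₁) - F₁ (x₂, y₂)‖ + ‖F₂ (x₁, y₁) - F₂ (x₂, y₂)‖ ≤
      ((K₁ + K₂ : NNReal) : ℝ) * (‖x₁ - x₂‖ + ‖y₁ - y₂‖) := by
  have hmax : ‖(x₁, y₁) - (x₂, y₂)‖ ≤ ‖x₁ - x₂‖ + ‖y₁ - y₂‖ := by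
    rw [Prod.mk_sub_mk, Prod.norm_def]
    exact max_le_add_of_nonneg (norm_nonneg _) (norm_nonneg _)
  calc _ ≤ K₁ * ‖(x₁, y₁) - (x₂, y₂)‖ + K₂ * ‖(x₁, y₁) - (x₂, y₂)‖ :=
        add_le_add (h₁.norm_sub_le _ _) (h₂.norm_sub_le _ _)
    _ ≤ ((K₁ + K₂ : NNReal) : ℝ) * (‖x₁ - x₂‖ + ‖y₁ - y₂‖) := by
        rw [NNReal.coe_add, ← add_mul]
        exact mul_le_mul_of_nonneg_left hmax (by positivity)

section Moreau

variable {m : ℕ} {μ : ℝ} {g : EuclideanSpace ℝ (Fin m) → ℝ}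
  {prox : EuclideanSpace ℝ (Fin m) → EuclideanSpace ℝ (Fin m)}

namespace IsProximalMap

theorem moreauEnv_le (hp : IsProximalMap μ g prox) (v w : EuclideanSpace ℝ (Fin m)) :
    MoreauEnv μ g prox w ≤ MoreauEnv μ g prox v + ⟪gradMoreau μ prox v, w - v⟫_ℝ +
      1 / (2 * μ) * ‖w - v‖ ^ 2 := by
  have hmin : g (prox w) + 1 / (2 * μ) * ‖prox w - w‖ ^ 2 ≤
      g (prox v) + 1 / (2 * μ) * ‖prox v - w‖ ^ 2 :=
    hp w (mem_univ (prox v))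
  rw [show prox v - w = (prox v - v) - (w - v) by abel, norm_sub_sq_real (prox v - v)] at hmin
  rw [MoreauEnv, MoreauEnv, gradMoreau, real_inner_smul_left, ← neg_sub (prox v) v,
    inner_neg_left, show 1 / μ = 2 * (1 / (2 * μ)) by ring]
  linarith

theorem abs_moreauEnv_sub_sub_inner_le (hp : IsProximalMap μ g prox) (hμ : 0 < μ)
    (hg : ConvexOn ℝ univ g) (v w : EuclideanSpace ℝ (Fin m)) :
    |MoreauEnv μ g prox w - MoreauEnv μ g prox v - ⟪gradMoreau μ prox v, w - v⟫_ℝ| ≤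
      1 / (2 * μ) * ‖w - v‖ ^ 2 := by
  have hupper := hp.moreauEnv_le v w
  have hlower := hp.moreauEnv_le w v
  have hmono : 0 ≤ ⟪gradMoreau μ prox w - gradMoreau μ prox v, w - v⟫_ℝ := by
    rw [gradMoreau, gradMoreau, ← smul_sub, real_inner_smul_left]
    exact mul_nonneg (by positivity) (hp.inner_sub_sub_sub_nonneg hμ hg v w)
  rw [← neg_sub w v, inner_neg_right, norm_neg] at hlower
  rw [inner_sub_left] at hmono
  rw [abs_le]
  constructor <;> linarith

theorem hasGradientAt_moreauEnv (hp : IsProximalMap μ g prox) (hμ : 0 < μ)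
    (hg : ConvexOn ℝ univ g) (v : EuclideanSpace ℝ (Fin m)) :
    HasGradientAt (MoreauEnv μ g prox) (gradMoreau μ prox v) v :=
  hasGradientAt_of_abs_sub_sub_inner_le _ (hp.abs_moreauEnv_sub_sub_inner_le hμ hg v)

theorem lipschitzWith_gradMoreau (hp : IsProximalMap μ g prox) (hμ : 0 < μ)
    (hg : ConvexOn ℝ univ g) : LipschitzWith (1 / μ).toNNReal (gradMoreau μ prox) := by
  refine LipschitzWith.of_dist_le' fun w v => ?_
  rw [dist_eq_norm, dist_eq_norm, gradMoreau, gradMoreau, ← smul_sub, norm_smul,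
    Real.norm_of_nonneg (by positivity)]
  exact mul_le_mul_of_nonneg_left (hp.norm_sub_sub_le hμ hg v w) (by positivity)

end IsProximalMap

end Moreau

section Lagrangian

variable {n m : ℕ}

noncomputable def mulVecCLM (T : Matrix (Fin m) (Fin n) ℝ) :
    EuclideanSpace ℝ (Fin n) →L[ℝ] EuclideanSpace ℝ (Fin m) :=
  LinearMap.toContinuousLinearMap (Matrix.toEuclideanLin T)

@[fun_prop]
theorem continuous_mulVecE (T : Matrix (Fin m) (Fin n) ℝ) : Continuous (mulVecE T) :=
  (mulVecCLM T).continuous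

theorem inner_mulVecE_transpose (T : Matrix (Fin m) (Fin n) ℝ) (u : EuclideanSpace ℝ (Fin m))
    (x : EuclideanSpace ℝ (Fin n)) : ⟪mulVecE Tᵀ u, x⟫_ℝ = ⟪u, mulVecE T x⟫_ℝ := by
  change ⟪Matrix.toEuclideanLin Tᵀ u, x⟫_ℝ = ⟪u, Matrix.toEuclideanLin T x⟫_ℝ
  rw [← conjTranspose_eq_transpose_of_trivial, toEuclideanLin_conjTranspose_eq_adjoint]
  exact LinearMap.adjoint_inner_left _ x u

noncomputable def mulVecAddSMulCLM (T : Matrix (Fin m) (Fin n) ℝ) (μ : ℝ) :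
    EuclideanSpace ℝ (Fin n) × EuclideanSpace ℝ (Fin m) →L[ℝ] EuclideanSpace ℝ (Fin m) :=
  (mulVecCLM T).coprod (μ • ContinuousLinearMap.id ℝ _)

variable {μ : ℝ} {g : EuclideanSpace ℝ (Fin m) → ℝ}
  {prox : EuclideanSpace ℝ (Fin m) → EuclideanSpace ℝ (Fin m)}

namespace IsProximalMap

theorem hasGradientAt_moreauEnv_mulVecE_add (hp : IsProximalMap μ g prox) (hμ : 0 < μ)
    (hg : ConvexOn ℝ univ g) (T : Matrix (Fin m) (Fin n) ℝ) (y : EuclideanSpace ℝ (Fin m))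
    (x : EuclideanSpace ℝ (Fin n)) :
    HasGradientAt (fun x' => MoreauEnv μ g prox (mulVecE T x' + μ • y))
      (mulVecE Tᵀ (gradMoreau μ prox (mulVecE T x + μ • y))) x :=
  (hp.hasGradientAt_moreauEnv hμ hg _).comp_of_inner_eq
    ((mulVecCLM T).hasFDerivAt.add_const _) fun u => (inner_mulVecE_transpose T _ u).symm

theorem hasGradientAt_moreauEnv_add_smul (hp : IsProximalMap μ g prox) (hμ : 0 < μ)
    (hg : ConvexOn ℝ univ g) (v y : EuclideanSpace ℝ (Fin m)) :
    HasGradientAt (fun y' => MoreauEnv μ g prox (v + μ • y'))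
      (μ • gradMoreau μ prox (v + μ • y)) y :=
  (hp.hasGradientAt_moreauEnv hμ hg _).comp_of_inner_eq
    (((hasFDerivAt_id y).const_smul μ).const_add v) fun u => by
      simp [real_inner_smul_left, real_inner_smul_right]

theorem lipschitzWith_gradMoreau_comp (hp : IsProximalMap μ g prox) (hμ : 0 < μ)
    (hg : ConvexOn ℝ univ g) (T : Matrix (Fin m) (Fin n) ℝ) :
    LipschitzWith ((1 / μ).toNNReal * ‖mulVecAddSMulCLM T μ‖₊)
      (fun p : EuclideanSpace ℝ (Fin n) × EuclideanSpace ℝ (Fin m) =>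
        gradMoreau μ prox (mulVecE T p.1 + μ • p.2)) :=
  (hp.lipschitzWith_gradMoreau hμ hg).comp (mulVecAddSMulCLM T μ).lipschitz

end IsProximalMap

variable {f : EuclideanSpace ℝ (Fin n) → ℝ} {T : Matrix (Fin m) (Fin n) ℝ}

theorem hasGradientAt_augLagrangian_primal (hp : IsProximalMap μ g prox) (hμ : 0 < μ)
    (hg : ConvexOn ℝ univ g) {G x : EuclideanSpace ℝ (Fin n)} (hf : HasGradientAt f G x)
    (y : EuclideanSpace ℝ (Fin m)) :
    HasGradientAt
      (fun x' => f x' + MoreauEnv μ g prox (mulVecE T x' + μ • y) - μ / 2 * ‖y‖ ^ 2)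
      (G + mulVecE Tᵀ (gradMoreau μ prox (mulVecE T x + μ • y))) x := by
  rw [hasGradientAt_iff_hasFDerivAt, map_add]
  exact (hf.hasFDerivAt.add
    (hp.hasGradientAt_moreauEnv_mulVecE_add hμ hg T y x).hasFDerivAt).sub_const _

theorem hasGradientAt_augLagrangian_dual (hp : IsProximalMap μ g prox) (hμ : 0 < μ)
    (hg : ConvexOn ℝ univ g) (x : EuclideanSpace ℝ (Fin n)) (y : EuclideanSpace ℝ (Fin m)) :
    HasGradientAt
      (fun y' => f x + MoreauEnv μ g prox (mulVecE T x + μ • y') - μ / 2 * ‖y'‖ ^ 2)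
      (μ • gradMoreau μ prox (mulVecE T x + μ • y) - μ • y) y := by
  rw [hasGradientAt_iff_hasFDerivAt]
  refine (((hp.hasGradientAt_moreauEnv_add_smul hμ hg (mulVecE T x) y).hasFDerivAt.const_add
    (f x)).sub ((hasStrictFDerivAt_norm_sq y).hasFDerivAt.const_mul (μ / 2))).congr_fderiv ?_
  ext u
  simp only [map_sub, map_smul, _root_.sub_apply, _root_.smul_apply,
    toDual_apply_apply, coe_innerSL_apply, smul_eq_mul, nsmul_eq_mul, Nat.cast_ofNat]
  ring

end Lagrangian

theorem proximal_augmented_lagrangian_differentiable_general {n m : ℕ} (μ : ℝ) (hμ : 0 < μ)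
    (f : EuclideanSpace ℝ (Fin n) → ℝ)
    (f' : EuclideanSpace ℝ (Fin n) → EuclideanSpace ℝ (Fin n))
    (hf : ContDiff ℝ 2 f)
    (hf' : ∀ x, HasGradientAt f (f' x) x)
    (g : EuclideanSpace ℝ (Fin m) → ℝ)
    (hg : ConvexOn ℝ Set.univ g)
    (T : Matrix (Fin m) (Fin n) ℝ)
    (prox : EuclideanSpace ℝ (Fin m) → EuclideanSpace ℝ (Fin m))
    (hprox : ∀ v, IsMinOn (fun z => g z + (1 / (2 * μ)) * ‖z - v‖ ^ 2) Set.univ (prox v)) :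
    (∀ (x : EuclideanSpace ℝ (Fin n)) (y : EuclideanSpace ℝ (Fin m)),
      HasGradientAt
        (fun x' => f x' + MoreauEnv μ g prox (mulVecE T x' + μ • y) - (μ / 2) * ‖y‖ ^ 2)
        (f' x + mulVecE Tᵀ (gradMoreau μ prox (mulVecE T x + μ • y))) x) ∧
    (∀ (x : EuclideanSpace ℝ (Fin n)) (y : EuclideanSpace ℝ (Fin m)),
      HasGradientAt
        (fun y' => f x + MoreauEnv μ g prox (mulVecE T x + μ • y') - (μ / 2) * ‖y'‖ ^ 2)
        (μ • gradMoreau μ prox (mulVecE T x + μ • y) - μ • y) y) ∧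
    (Continuous (fun p : EuclideanSpace ℝ (Fin n) × EuclideanSpace ℝ (Fin m) =>
      f' p.1 + mulVecE Tᵀ (gradMoreau μ prox (mulVecE T p.1 + μ • p.2)))) ∧
    (Continuous (fun p : EuclideanSpace ℝ (Fin n) × EuclideanSpace ℝ (Fin m) =>
      μ • gradMoreau μ prox (mulVecE T p.1 + μ • p.2) - μ • p.2)) ∧
    (∀ Lf : ℝ, (∀ a b, ‖f' a - f' b‖ ≤ Lf * ‖a - b‖) →
      ∃ K : ℝ, 0 ≤ K ∧
        ∀ (x₁ x₂ : EuclideanSpace ℝ (Fin n)) (y₁ y₂ : EuclideanSpace ℝ (Fin m)),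
          ‖(f' x₁ + mulVecE Tᵀ (gradMoreau μ prox (mulVecE T x₁ + μ • y₁))) -
            (f' x₂ + mulVecE Tᵀ (gradMoreau μ prox (mulVecE T x₂ + μ • y₂)))‖ +
          ‖(μ • gradMoreau μ prox (mulVecE T x₁ + μ • y₁) - μ • y₁) -
            (μ • gradMoreau μ prox (mulVecE T x₂ + μ • y₂) - μ • y₂)‖ ≤
          K * (‖x₁ - x₂‖ + ‖y₁ - y₂‖)) := by
  have hp : IsProximalMap μ g prox := hprox
  have hGA := hp.lipschitzWith_gradMoreau_comp hμ hg T
  have hGc := (hp.lipschitzWith_gradMoreau hμ hg).continuous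
  have hf'c : Continuous f' := continuous_of_hasGradientAt (hf.of_le one_le_two) hf'
  refine ⟨fun x y => hasGradientAt_augLagrangian_primal hp hμ hg (hf' x) y,
    hasGradientAt_augLagrangian_dual hp hμ hg, by fun_prop, by fun_prop, fun Lf hLf => ?_⟩
  have hf'L : LipschitzWith Lf.toNNReal f' :=
    LipschitzWith.of_dist_le' fun a b => by simpa only [dist_eq_norm] using hLf a b
  have hprimal := (hf'L.comp LipschitzWith.prod_fst).add ((mulVecCLM Tᵀ).lipschitz.comp hGA)
  have hdual := ((lipschitzWith_smul μ).comp hGA).sub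
    ((lipschitzWith_smul μ).comp LipschitzWith.prod_snd)
  exact ⟨_, NNReal.coe_nonneg _, fun x₁ x₂ y₁ y₂ =>
    norm_sub_add_norm_sub_le_of_lipschitzWith hprimal hdual x₁ x₂ y₁ y₂⟩

/-- The proximal augmented Lagrangian `L_μ(x;y) = f(x) + M_{μg}(Tx + μy) − (μ/2)‖y‖²` is
continuously differentiable with `∇ₓL_μ = ∇f(x) + Tᵀ∇M_{μg}(Tx + μy)` and
`∇_y L_μ = μ∇M_{μg}(Tx + μy) − μy`, and its gradient is Lipschitz whenever `∇f` is. -/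
theorem proximal_augmented_lagrangian_differentiable {n m : ℕ} (μ : ℝ) (hμ : 0 < μ)
    (f : EuclideanSpace ℝ (Fin n) → ℝ)
    (f' : EuclideanSpace ℝ (Fin n) → EuclideanSpace ℝ (Fin n))
    (hf : ContDiff ℝ 2 f) (hfc : ConvexOn ℝ Set.univ f)
    (hf' : ∀ x, HasGradientAt f (f' x) x)
    (g : EuclideanSpace ℝ (Fin m) → ℝ)
    (hg : ConvexOn ℝ Set.univ g) (hlsc : LowerSemicontinuous g)
    (T : Matrix (Fin m) (Fin n) ℝ)
    (prox : EuclideanSpace ℝ (Fin m) → EuclideanSpace ℝ (Fin m))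
    (hprox : ∀ v, IsMinOn (fun z => g z + (1 / (2 * μ)) * ‖z - v‖ ^ 2) Set.univ (prox v)) :
    (∀ (x : EuclideanSpace ℝ (Fin n)) (y : EuclideanSpace ℝ (Fin m)),
      HasGradientAt
        (fun x' => f x' + MoreauEnv μ g prox (mulVecE T x' + μ • y) - (μ / 2) * ‖y‖ ^ 2)
        (f' x + mulVecE Tᵀ (gradMoreau μ prox (mulVecE T x + μ • y))) x) ∧
    (∀ (x : EuclideanSpace ℝ (Fin n)) (y : EuclideanSpace ℝ (Fin m)),
      HasGradientAt
        (fun y' => f x + MoreauEnv μ g prox (mulVecE T x + μ • y') - (μ / 2) * ‖y'‖ ^ 2)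
        (μ • gradMoreau μ prox (mulVecE T x + μ • y) - μ • y) y) ∧
    (Continuous (fun p : EuclideanSpace ℝ (Fin n) × EuclideanSpace ℝ (Fin m) =>
      f' p.1 + mulVecE Tᵀ (gradMoreau μ prox (mulVecE T p.1 + μ • p.2)))) ∧
    (Continuous (fun p : EuclideanSpace ℝ (Fin n) × EuclideanSpace ℝ (Fin m) =>
      μ • gradMoreau μ prox (mulVecE T p.1 + μ • p.2) - μ • p.2)) ∧
    (∀ Lf : ℝ, (∀ a b, ‖f' a - f' b‖ ≤ Lf * ‖a - b‖) →
      ∃ K : ℝ, 0 ≤ K ∧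
        ∀ (x₁ x₂ : EuclideanSpace ℝ (Fin n)) (y₁ y₂ : EuclideanSpace ℝ (Fin m)),
          ‖(f' x₁ + mulVecE Tᵀ (gradMoreau μ prox (mulVecE T x₁ + μ • y₁))) -
            (f' x₂ + mulVecE Tᵀ (gradMoreau μ prox (mulVecE T x₂ + μ • y₂)))‖ +
          ‖(μ • gradMoreau μ prox (mulVecE T x₁ + μ • y₁) - μ • y₁) -
            (μ • gradMoreau μ prox (mulVecE T x₂ + μ • y₂) - μ • y₂)‖ ≤
          K * (‖x₁ - x₂‖ + ‖y₁ - y₂‖)) :=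
  proximal_augmented_lagrangian_differentiable_general μ hμ f f' hf hf' g hg T prox hprox
end

section
/- Let w̃ be a solution of the symmetric indefinite system [[H + (1/μ)Tᵀ(I−P)T, Tᵀ(I−P)], [(I−P)T, −μP]] w̃ = −diag(I, −I)·q for a vector q = (q_x, q_y). Then w̃ᵀq = −x̃ᵀ(H + (1/μ)Tᵀ(I−P)T)x̃ − μỹᵀPỹ ≤ 0, with strict inequality unless both x̃ = 0 and Pỹ = 0; consequently, for any σ ∈ (0,1], d = (1−σ)w̃ − σq satisfies dᵀq ≤ −σ‖q‖², so d is a descent direction whenever q ≠ 0. -/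
/-!
Pair the first block row with `x̃` and the second with `ỹ`: since `I − P` is symmetric, the
off-diagonal blocks `Tᵀ(I − P)` and `(I − P)T` contribute the same cross term with opposite
signs, leaving `w̃ᵀq = −x̃ᵀAx̃ − μ ỹᵀPỹ` with `A = H + μ⁻¹Tᵀ(I − P)T` positive definite.
Both quadratic forms are nonnegative, so `w̃ᵀq ≤ 0`, and then
`dᵀq = (1 − σ) w̃ᵀq − σ‖q‖² ≤ −σ‖q‖²`.
-/

open Matrix

namespace Matrix

variable {ι κ R : Type*} [Fintype ι] [Fintype κ]

theorem dotProduct_add_dotProduct_eq_of_saddlePoint [CommRing R] {A : Matrix ι ι R}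
    {K : Matrix κ ι R} {D : Matrix κ κ R} {x qx : ι → R} {y qy : κ → R}
    (h₁ : A *ᵥ x + Kᵀ *ᵥ y = -qx) (h₂ : K *ᵥ x - D *ᵥ y = qy) :
    x ⬝ᵥ qx + y ⬝ᵥ qy = -(x ⬝ᵥ A *ᵥ x) - y ⬝ᵥ D *ᵥ y := by
  have hcross : x ⬝ᵥ Kᵀ *ᵥ y = y ⬝ᵥ K *ᵥ x := by
    rw [dotProduct_mulVec, vecMul_transpose, dotProduct_comm]
  rw [← neg_neg qx, ← h₁, ← h₂, dotProduct_neg, dotProduct_add, dotProduct_sub, hcross]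
  ring

theorem smul_sub_smul_dotProduct [CommRing R] (σ : R) (w q : ι → R) :
    ((1 - σ) • w - σ • q) ⬝ᵥ q = (1 - σ) * (w ⬝ᵥ q) - σ * (q ⬝ᵥ q) := by
  rw [sub_dotProduct, smul_dotProduct, smul_dotProduct, smul_eq_mul, smul_eq_mul]

theorem dotProduct_self_nonneg [Ring R] [LinearOrder R] [IsStrictOrderedRing R] (v : ι → R) :
    0 ≤ v ⬝ᵥ v :=
  Finset.sum_nonneg fun i _ => mul_self_nonneg (v i)

theorem dotProduct_self_pos [Ring R] [LinearOrder R] [IsStrictOrderedRing R] {v : ι → R}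
    (hv : v ≠ 0) : 0 < v ⬝ᵥ v :=
  (dotProduct_self_nonneg v).lt_of_ne' (mt dotProduct_self_eq_zero.1 hv)

theorem dotProduct_self_add_dotProduct_self_pos [Ring R] [LinearOrder R] [IsStrictOrderedRing R]
    {v : ι → R} {w : κ → R} (h : v ≠ 0 ∨ w ≠ 0) : 0 < v ⬝ᵥ v + w ⬝ᵥ w := by
  rcases h with hv | hw
  · exact add_pos_of_pos_of_nonneg (dotProduct_self_pos hv) (dotProduct_self_nonneg w)
  · exact add_pos_of_nonneg_of_pos (dotProduct_self_nonneg v) (dotProduct_self_pos hw)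

theorem PosDef.add_smul_transpose_mul_mul {H : Matrix ι ι ℝ} (hH : H.PosDef)
    {S : Matrix κ κ ℝ} (hS : S.PosSemidef) (T : Matrix κ ι ℝ) {c : ℝ} (hc : 0 ≤ c) :
    (H + c • (Tᵀ * S * T)).PosDef :=
  hH.add_posSemidef (by simpa using (hS.conjTranspose_mul_mul_same T).smul hc)

end Matrix

/-- Descent-direction property of the primal-dual second order update: if `w̃ = (x̃, ỹ)` solves
`[[H + μ⁻¹Tᵀ(I−P)T, Tᵀ(I−P)], [(I−P)T, −μP]] w̃ = −diag(I, −I) q`, then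
`w̃ᵀq = −x̃ᵀ(H + μ⁻¹Tᵀ(I−P)T)x̃ − μ ỹᵀPỹ ≤ 0`, strictly unless `x̃ = 0` and `Pỹ = 0`; and for
`σ ∈ (0,1]` the direction `d = (1−σ)w̃ − σq` satisfies `dᵀq ≤ −σ‖q‖²`, hence is a descent
direction whenever `q ≠ 0`. -/
theorem descent_direction {n m : ℕ} (μ : ℝ) (hμ : 0 < μ)
    (H : Matrix (Fin n) (Fin n) ℝ) (hH : H.PosDef)
    (P : Matrix (Fin m) (Fin m) ℝ) (hP : P.PosSemidef) (hIP : (1 - P).PosSemidef)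
    (T : Matrix (Fin m) (Fin n) ℝ)
    (xt : Fin n → ℝ) (yt : Fin m → ℝ) (qx : Fin n → ℝ) (qy : Fin m → ℝ)
    (heq1 : (H + μ⁻¹ • (Tᵀ * (1 - P) * T)).mulVec xt + (Tᵀ * (1 - P)).mulVec yt = -qx)
    (heq2 : ((1 - P) * T).mulVec xt - μ • P.mulVec yt = qy) :
    (xt ⬝ᵥ qx + yt ⬝ᵥ qy =
      -(xt ⬝ᵥ (H + μ⁻¹ • (Tᵀ * (1 - P) * T)).mulVec xt) - μ * (yt ⬝ᵥ P.mulVec yt)) ∧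
    (xt ⬝ᵥ qx + yt ⬝ᵥ qy ≤ 0) ∧
    ((xt ≠ 0 ∨ P.mulVec yt ≠ 0) → xt ⬝ᵥ qx + yt ⬝ᵥ qy < 0) ∧
    (∀ σ : ℝ, 0 < σ → σ ≤ 1 →
      (((1 - σ) • xt - σ • qx) ⬝ᵥ qx + ((1 - σ) • yt - σ • qy) ⬝ᵥ qy ≤
        -(σ * (qx ⬝ᵥ qx + qy ⬝ᵥ qy))) ∧
      ((qx ≠ 0 ∨ qy ≠ 0) →
        ((1 - σ) • xt - σ • qx) ⬝ᵥ qx + ((1 - σ) • yt - σ • qy) ⬝ᵥ qy < 0)) := by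
  set A := H + μ⁻¹ • (Tᵀ * (1 - P) * T)
  have hA : A.PosDef := hH.add_smul_transpose_mul_mul hIP T (inv_nonneg.2 hμ.le)
  have hK : ((1 - P) * T)ᵀ = Tᵀ * (1 - P) := by
    rw [transpose_mul, ← conjTranspose_eq_transpose_of_trivial (1 - P), hIP.isHermitian.eq]
  have key := dotProduct_add_dotProduct_eq_of_saddlePoint (K := (1 - P) * T) (D := μ • P)
    (qy := qy) (by rwa [hK]) (by rwa [smul_mulVec])
  rw [smul_mulVec, dotProduct_smul, smul_eq_mul] at key
  have hxA : 0 ≤ xt ⬝ᵥ A *ᵥ xt := by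
    simpa using hA.posSemidef.dotProduct_mulVec_nonneg xt
  have hyP : 0 ≤ yt ⬝ᵥ P *ᵥ yt := by simpa using hP.dotProduct_mulVec_nonneg yt
  have hneg : xt ⬝ᵥ qx + yt ⬝ᵥ qy ≤ 0 := by linarith [mul_nonneg hμ.le hyP]
  refine ⟨key, hneg, ?_, fun σ hσ hσ1 => ?_⟩
  · rintro (hx | hy)
    · have hxA_pos : 0 < xt ⬝ᵥ A *ᵥ xt := by simpa using hA.dotProduct_mulVec_pos hx
      linarith [mul_nonneg hμ.le hyP]
    · have hyP_pos : 0 < yt ⬝ᵥ P *ᵥ yt :=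
        hyP.lt_of_ne' (mt (hP.dotProduct_mulVec_zero_iff yt).1 hy)
      linarith [hxA, mul_pos hμ hyP_pos]
  · have hdescent : ((1 - σ) • xt - σ • qx) ⬝ᵥ qx + ((1 - σ) • yt - σ • qy) ⬝ᵥ qy ≤
        -(σ * (qx ⬝ᵥ qx + qy ⬝ᵥ qy)) := by
      rw [smul_sub_smul_dotProduct, smul_sub_smul_dotProduct]
      linarith [mul_nonpos_of_nonneg_of_nonpos (sub_nonneg.2 hσ1) hneg]
    exact ⟨hdescent, fun hq => hdescent.trans_lt
      (neg_neg_of_pos (mul_pos hσ (dotProduct_self_add_dotProduct_self_pos hq)))⟩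
end

section
/- Let f: ℝ^n → ℝ be differentiable and m_f-strongly convex, g: ℝ^m → ℝ ∪ {+∞} convex, T ∈ ℝ^{m×n}, and x̄ a point where g is subdifferentiable at Tx̄. Then every minimizer x* of F(x) = f(x) + g(Tx) satisfies ‖x* − x̄‖ ≤ (2/m_f)‖∇f(x̄) + Tᵀv‖ for any v ∈ ∂g(Tx̄). -/
/-! With `d = x* − x̄` and `q = ∇f(x̄) + Tᵀv`, the first-order bound for the strongly convex `f`
and the subgradient inequality for `g` add up to `F(x*) − F(x̄) ≥ ⟪q, d⟫ + (m_f/2)‖d‖²`.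
Minimality of `x*` makes the left side nonpositive, so Cauchy–Schwarz gives
`(m_f/2)‖d‖² ≤ ‖q‖‖d‖`. -/

open Matrix RealInnerProductSpace

theorem ConvexOn.add_fderiv_sub_le {E : Type*} [NormedAddCommGroup E] [NormedSpace ℝ E]
    {s : Set E} {h : E → ℝ} {L : E →L[ℝ] ℝ} {a x : E} (hh : ConvexOn ℝ s h)
    (ha : a ∈ s) (hx : x ∈ s) (hd : HasFDerivAt h L a) :
    h a + L (x - a) ≤ h x := by
  set line := AffineMap.lineMap (k := ℝ) a x
  have hconv : ConvexOn ℝ (Set.Icc 0 1) (h ∘ line) :=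
    (hh.comp_affineMap line).subset (fun t ht => hh.1.lineMap_mem ha hx ht) (convex_Icc 0 1)
  have hderiv : HasDerivAt (h ∘ line) (L (x - a)) 0 := by
    have hline : HasDerivAt line (x - a) 0 := AffineMap.hasDerivAt_lineMap ..
    exact (by simpa [line] using hd : HasFDerivAt h L (line 0)).comp_hasDerivAt 0 hline
  have hslope := hconv.le_slope_of_hasDerivAt (by simp) (by simp) zero_lt_one hderiv
  simp only [slope_def_field, Function.comp_apply, line, AffineMap.lineMap_apply_zero,
    AffineMap.lineMap_apply_one, sub_zero, div_one] at hslope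
  linarith

section InnerProductSpace

variable {F : Type*} [NormedAddCommGroup F] [InnerProductSpace ℝ F]

theorem StrongConvexOn.add_inner_add_sq_le [CompleteSpace F] {s : Set F} {m : ℝ} {f : F → ℝ}
    {f' a x : F} (hf : StrongConvexOn s m f) (ha : a ∈ s) (hx : x ∈ s)
    (hd : HasGradientAt f f' a) :
    f a + ⟪f', x - a⟫ + m / 2 * ‖x - a‖ ^ 2 ≤ f x := by
  have hsq : HasFDerivAt (fun y : F => m / 2 * ‖y‖ ^ 2) ((m / 2) • (2 • innerSL ℝ a)) a :=
    (hasStrictFDerivAt_norm_sq a).hasFDerivAt.const_mul (m / 2)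
  have hconv := (strongConvexOn_iff_convex.mp hf).add_fderiv_sub_le ha hx (hd.hasFDerivAt.sub hsq)
  simp only [_root_.sub_apply, InnerProductSpace.toDual_apply_apply, _root_.smul_apply,
    innerSL_apply_apply, smul_eq_mul, nsmul_eq_mul, Nat.cast_ofNat] at hconv
  have hsq_id : ‖x - a‖ ^ 2 = ‖x‖ ^ 2 - ‖a‖ ^ 2 - 2 * ⟪a, x - a⟫ := by
    rw [norm_sub_sq_real, inner_sub_right, real_inner_self_eq_norm_sq, real_inner_comm]
    ring
  rw [hsq_id]
  linarith

theorem norm_le_of_inner_add_sq_nonpos {q d : F} {m : ℝ} (hm : 0 < m)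
    (h : ⟪q, d⟫ + m / 2 * ‖d‖ ^ 2 ≤ 0) : ‖d‖ ≤ 2 / m * ‖q‖ := by
  have hcs : -⟪q, d⟫ ≤ ‖q‖ * ‖d‖ := by
    linarith [neg_abs_le ⟪q, d⟫, abs_real_inner_le_norm q d]
  rcases (norm_nonneg d).eq_or_lt with h0 | h0
  · rw [← h0]
    positivity
  · rw [div_mul_eq_mul_div, le_div_iff₀ hm]
    nlinarith

end InnerProductSpace

theorem mulVecE_sub {n m : ℕ} (T : Matrix (Fin m) (Fin n) ℝ) (x y : EuclideanSpace ℝ (Fin n)) :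
    mulVecE T x - mulVecE T y = mulVecE T (x - y) := by
  simp [mulVecE, Matrix.mulVec_sub]

theorem inner_mulVecE_right {n m : ℕ} (T : Matrix (Fin m) (Fin n) ℝ)
    (v : EuclideanSpace ℝ (Fin m)) (x : EuclideanSpace ℝ (Fin n)) :
    ⟪v, mulVecE T x⟫ = ⟪mulVecE Tᵀ v, x⟫ := by
  simp only [mulVecE, EuclideanSpace.inner_eq_star_dotProduct, star_trivial, dotProduct_comm,
    dotProduct_mulVec, mulVec_transpose]

theorem minimizer_ball_bound_general {n m : ℕ} (mf : ℝ) (hmf : 0 < mf)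
    (f : EuclideanSpace ℝ (Fin n) → ℝ)
    (f' : EuclideanSpace ℝ (Fin n) → EuclideanSpace ℝ (Fin n))
    (hf' : ∀ x, HasGradientAt f (f' x) x)
    (hsc : ConvexOn ℝ Set.univ (fun x => f x - mf / 2 * ‖x‖ ^ 2))
    (g : EuclideanSpace ℝ (Fin m) → ℝ)
    (T : Matrix (Fin m) (Fin n) ℝ)
    (xbar : EuclideanSpace ℝ (Fin n)) (v : EuclideanSpace ℝ (Fin m))
    (hv : ∀ z, g (mulVecE T xbar) + ⟪v, z - mulVecE T xbar⟫ ≤ g z)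
    (xstar : EuclideanSpace ℝ (Fin n))
    (hmin : IsMinOn (fun x => f x + g (mulVecE T x)) Set.univ xstar) :
    ‖xstar - xbar‖ ≤ (2 / mf) * ‖f' xbar + mulVecE Tᵀ v‖ := by
  have hf_lower := (strongConvexOn_iff_convex.mpr hsc).add_inner_add_sq_le
    (Set.mem_univ xbar) (Set.mem_univ xstar) (hf' xbar)
  have hg_lower := hv (mulVecE T xstar)
  rw [mulVecE_sub, inner_mulVecE_right] at hg_lower
  have hopt : f xstar + g (mulVecE T xstar) ≤ f xbar + g (mulVecE T xbar) :=
    hmin (Set.mem_univ xbar)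
  apply norm_le_of_inner_add_sq_nonpos hmf
  rw [inner_add_left]
  linarith

/-- Any minimizer `x*` of `F(x) = f(x) + g(Tx)`, with `f` differentiable `m_f`-strongly convex
and `g` convex, satisfies `‖x* − x̄‖ ≤ (2/m_f)‖∇f(x̄) + Tᵀv‖` for any subgradient
`v ∈ ∂g(Tx̄)`. -/
theorem minimizer_ball_bound {n m : ℕ} (mf : ℝ) (hmf : 0 < mf)
    (f : EuclideanSpace ℝ (Fin n) → ℝ)
    (f' : EuclideanSpace ℝ (Fin n) → EuclideanSpace ℝ (Fin n))
    (hf' : ∀ x, HasGradientAt f (f' x) x)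
    (hsc : ConvexOn ℝ Set.univ (fun x => f x - mf / 2 * ‖x‖ ^ 2))
    (g : EuclideanSpace ℝ (Fin m) → ℝ) (hg : ConvexOn ℝ Set.univ g)
    (T : Matrix (Fin m) (Fin n) ℝ)
    (xbar : EuclideanSpace ℝ (Fin n)) (v : EuclideanSpace ℝ (Fin m))
    (hv : ∀ z, g (mulVecE T xbar) + ⟪v, z - mulVecE T xbar⟫ ≤ g z)
    (xstar : EuclideanSpace ℝ (Fin n))
    (hmin : IsMinOn (fun x => f x + g (mulVecE T x)) Set.univ xstar) :
    ‖xstar - xbar‖ ≤ (2 / mf) * ‖f' xbar + mulVecE Tᵀ v‖ :=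
  minimizer_ball_bound_general mf hmf f f' hf' hsc g T xbar v hv xstar hmin
end

section
/- Let Q = [[G + (1/μ)Tᵀ(I−D)T, Tᵀ(I−D)], [(I−D)T, −μD]] where G is symmetric with m_f I ⪯ G ⪯ L_f I (0 < m_f ≤ L_f), D symmetric with 0 ⪯ D ⪯ I, T full row rank, μ > 0. Then there exists κ₁ > 0, depending only on m_f, L_f, μ, T, such that QᵀQ ⪰ κ₁ I for all admissible (D, G). -/
/-!
The admissible pairs `(D, G)` form the product of two Loewner-order intervals `[0, 1]` and
`[m_f, L_f]`, and Loewner intervals of real matrices are compact: they are closed, and the entries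
of a positive semidefinite matrix are bounded by its diagonal. Every `Q` is nonsingular, being a
saddle-point matrix `[[A, Bᵀ], [B, -C]]` with `A ≻ 0`, `C ⪰ 0` and `ker Bᵀ ∩ ker C = 0`: pairing
`Q (u, v) = 0` with `(u, -v)` gives `uᵀAu + vᵀCv = 0`. Hence `(D, G, x) ↦ |Q x|²` is continuous
and positive on the compact set of admissible pairs times unit vectors, and its minimum is `κ₁`.
-/

open Matrix
open scoped MatrixOrder

namespace Matrix

section LoewnerInterval

variable {n : Type*} [Fintype n]

theorem isClosed_setOf_posSemidef : IsClosed {A : Matrix n n ℝ | A.PosSemidef} := by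
  simp only [posSemidef_iff_dotProduct_mulVec, Set.ofPred_and, Set.ofPred_forall]
  exact (isClosed_eq continuous_id.matrix_conjTranspose continuous_id).inter
    (isClosed_iInter fun x => isClosed_le continuous_const
      (continuous_const.dotProduct (continuous_id.matrix_mulVec continuous_const)))

theorem PosSemidef.abs_apply_le {A : Matrix n n ℝ} (hA : A.PosSemidef) (i j : n) :
    |A i j| ≤ (A i i + A j j) / 2 := by
  classical
  have hsymm : A j i = A i j := by simpa using hA.isHermitian.apply i j
  have hquad (s : ℝ) : 0 ≤ A i i + s * (A i j + A j i) + s ^ 2 * A j j := by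
    have := hA.dotProduct_mulVec_nonneg (Pi.single i 1 + Pi.single j s)
    simp [mulVec_add, add_dotProduct, dotProduct_add, mulVec_single, single_dotProduct] at this
    linarith
  rw [abs_le]
  constructor <;> nlinarith [hquad 1, hquad (-1)]

theorem isCompact_Icc_zero (C : Matrix n n ℝ) : IsCompact (Set.Icc 0 C) := by
  let r : n → n → ℝ := fun i j => (C i i + C j j) / 2
  refine (isCompact_univ_pi fun i => isCompact_univ_pi fun j => isCompact_Icc (a := -r i j)
    (b := r i j)).of_isClosed_subset ?_ ?_
  · simp only [Set.Icc, le_iff, sub_zero, Set.ofPred_and]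
    exact isClosed_setOf_posSemidef.inter
      (isClosed_setOf_posSemidef.preimage (continuous_const.sub continuous_id))
  · rintro A ⟨hA, hCA⟩
    simp only [Set.mem_univ_pi, Set.mem_Icc, ← abs_le]
    intro i j
    have hdiag (k : n) : A k k ≤ C k k := sub_nonneg.mp ((le_iff.mp hCA).diag_nonneg (i := k))
    show |A i j| ≤ (C i i + C j j) / 2
    linarith [hA.posSemidef.abs_apply_le i j, hdiag i, hdiag j]

instance : CompactIccSpace (Matrix n n ℝ) where
  isCompact_Icc {B C} := by
    have h : Set.Icc B C = (Homeomorph.subRight B) ⁻¹' Set.Icc 0 (C - B) := by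
      rw [show ⇑(Homeomorph.subRight B) = (· - B) from rfl, Set.preimage_sub_const_Icc,
        zero_add, sub_add_cancel]
    rw [h, Homeomorph.isCompact_preimage]
    exact isCompact_Icc_zero _

end LoewnerInterval

section UniformBound

variable {ι κ : Type*} [Fintype ι] [Fintype κ]

theorem posSemidef_transpose_mul_self_sub_smul_one [DecidableEq κ] (A : Matrix ι κ ℝ) {c : ℝ}
    (hA : ∀ x, x ⬝ᵥ x = 1 → c ≤ A *ᵥ x ⬝ᵥ A *ᵥ x) : (Aᵀ * A - c • 1).PosSemidef := by
  rw [← conjTranspose_eq_transpose_of_trivial]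
  refine .of_dotProduct_mulVec_nonneg
    ((isHermitian_conjTranspose_mul_self A).sub (isHermitian_one.smul (.all c))) fun x => ?_
  have hquad : star x ⬝ᵥ (Aᴴ * A - c • 1) *ᵥ x = A *ᵥ x ⬝ᵥ A *ᵥ x - c * (x ⬝ᵥ x) := by
    rw [star_trivial, sub_mulVec, dotProduct_sub, ← mulVec_mulVec, dotProduct_mulVec,
      conjTranspose_eq_transpose_of_trivial, vecMul_transpose, smul_mulVec, one_mulVec,
      dotProduct_smul, smul_eq_mul, dotProduct_comm]
  rw [hquad, sub_nonneg]
  rcases eq_or_ne x 0 with rfl | hx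
  · simp
  have hxx : 0 < x ⬝ᵥ x := by simpa using dotProduct_self_star_pos_iff.2 hx
  have hnormalize : (√(x ⬝ᵥ x))⁻¹ ^ 2 * (x ⬝ᵥ x) = 1 := by
    rw [inv_pow, Real.sq_sqrt hxx.le, inv_mul_cancel₀ hxx.ne']
  have h := hA ((√(x ⬝ᵥ x))⁻¹ • x) (by
    rw [smul_dotProduct, dotProduct_smul, smul_eq_mul, smul_eq_mul, ← mul_assoc, ← sq,
      hnormalize])
  rw [mulVec_smul, smul_dotProduct, dotProduct_smul, smul_eq_mul, smul_eq_mul, ← mul_assoc,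
    ← sq] at h
  calc c * (x ⬝ᵥ x) ≤ (√(x ⬝ᵥ x))⁻¹ ^ 2 * (A *ᵥ x ⬝ᵥ A *ᵥ x) * (x ⬝ᵥ x) :=
        mul_le_mul_of_nonneg_right h hxx.le
    _ = A *ᵥ x ⬝ᵥ A *ᵥ x := by rw [mul_right_comm, hnormalize, one_mul]

theorem isCompact_setOf_dotProduct_self_eq_one : IsCompact {x : κ → ℝ | x ⬝ᵥ x = 1} := by
  have h : {x : κ → ℝ | x ⬝ᵥ x = 1} =
      WithLp.toLp 2 ⁻¹' Metric.sphere (0 : EuclideanSpace ℝ κ) 1 := by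
    ext x
    simp [EuclideanSpace.norm_eq, dotProduct, sq]
  rw [h]
  exact (PiLp.homeomorph 2 _).symm.isCompact_preimage.2 (isCompact_sphere 0 1)

theorem exists_pos_forall_posSemidef_transpose_mul_self_sub_smul_one [DecidableEq κ]
    {P : Type*} [TopologicalSpace P] {K : Set P} (hK : IsCompact K) {Q : P → Matrix ι κ ℝ}
    (hQ : ContinuousOn Q K) (hinj : ∀ p ∈ K, ∀ x, Q p *ᵥ x = 0 → x = 0) :
    ∃ c : ℝ, 0 < c ∧ ∀ p ∈ K, ((Q p)ᵀ * Q p - c • 1).PosSemidef := by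
  have hcont : ContinuousOn (fun q : P × (κ → ℝ) => Q q.1 *ᵥ q.2 ⬝ᵥ Q q.1 *ᵥ q.2)
      (K ×ˢ {x | x ⬝ᵥ x = 1}) := by
    have hg : Continuous fun q : Matrix ι κ ℝ × (κ → ℝ) => q.1 *ᵥ q.2 ⬝ᵥ q.1 *ᵥ q.2 :=
      (continuous_fst.matrix_mulVec continuous_snd).dotProduct
        (continuous_fst.matrix_mulVec continuous_snd)
    have hQ' : ContinuousOn (fun q : P × (κ → ℝ) => Q q.1) (K ×ˢ {x | x ⬝ᵥ x = 1}) :=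
      hQ.comp continuousOn_fst fun q hq => hq.1
    exact hg.comp_continuousOn (f := fun q : P × (κ → ℝ) => (Q q.1, q.2))
      (hQ'.prodMk continuousOn_snd)
  have hpos : ∀ q ∈ K ×ˢ {x | x ⬝ᵥ x = 1}, 0 < Q q.1 *ᵥ q.2 ⬝ᵥ Q q.1 *ᵥ q.2 := by
    rintro ⟨p, x⟩ ⟨hp, hx⟩
    have hx0 : x ≠ 0 := by rintro rfl; simp at hx
    simpa using dotProduct_self_star_pos_iff.2 (mt (hinj p hp x) hx0)
  obtain ⟨c, hc, hle⟩ :=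
    (hK.prod isCompact_setOf_dotProduct_self_eq_one).exists_forall_le' hcont hpos
  exact ⟨c, hc, fun p hp => posSemidef_transpose_mul_self_sub_smul_one _
    fun x hx => hle (p, x) ⟨hp, hx⟩⟩

end UniformBound

section SaddlePoint

variable {n m : Type*} [Fintype n] [Fintype m]

theorem vecMul_injective_of_rank_eq_card {K : Type*} [Field K] {T : Matrix m n K}
    (hT : T.rank = Fintype.card m) : Function.Injective fun v => v ᵥ* T :=
  vecMul_injective_iff.2 <| linearIndependent_iff_card_eq_finrank_span.2 <| by
    rw [← hT, rank_eq_finrank_span_row]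
    rfl

theorem eq_zero_of_fromBlocks_mulVec_eq_zero {A : Matrix n n ℝ} {B : Matrix m n ℝ}
    {C : Matrix m m ℝ} (hA : A.PosDef) (hC : C.PosSemidef)
    (hBC : ∀ v, Bᵀ *ᵥ v = 0 → C *ᵥ v = 0 → v = 0) {x : n ⊕ m → ℝ}
    (hx : fromBlocks A Bᵀ B (-C) *ᵥ x = 0) : x = 0 := by
  rw [← Sum.elim_comp_inl_inr x] at hx ⊢
  set u := x ∘ Sum.inl
  set v := x ∘ Sum.inr
  rw [fromBlocks_mulVec, Sum.elim_comp_inl, Sum.elim_comp_inr, ← Sum.elim_zero_zero,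
    Sum.elim_eq_iff] at hx
  obtain ⟨h₁, h₂⟩ := hx
  have hsum : u ⬝ᵥ A *ᵥ u + v ⬝ᵥ C *ᵥ v = 0 := by
    have := congrArg₂ (fun a b => u ⬝ᵥ a - v ⬝ᵥ b) h₁ h₂
    simp only [dotProduct_add, neg_mulVec, dotProduct_neg, dotProduct_zero, sub_zero] at this
    rw [dotProduct_mulVec u Bᵀ, vecMul_transpose, dotProduct_comm (B *ᵥ u)] at this
    linarith
  have huAu := hA.posSemidef.dotProduct_mulVec_nonneg u
  have hvCv := hC.dotProduct_mulVec_nonneg v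
  rw [star_trivial] at huAu hvCv
  have hu : u = 0 := by
    by_contra hu
    have := hA.dotProduct_mulVec_pos hu
    rw [star_trivial] at this
    linarith
  have hCv : C *ᵥ v = 0 := by
    rw [← hC.dotProduct_mulVec_zero_iff, star_trivial]
    linarith
  have hBv : Bᵀ *ᵥ v = 0 := by rwa [hu, mulVec_zero, zero_add] at h₁
  rw [hu, hBC v hBv hCv, Sum.elim_zero_zero]

end SaddlePoint

section

variable {n m : Type*} [Fintype m] [DecidableEq m]

noncomputable def saddleMatrix (μ : ℝ) (T : Matrix m n ℝ) (D : Matrix m m ℝ) (G : Matrix n n ℝ) :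
    Matrix (n ⊕ m) (n ⊕ m) ℝ :=
  fromBlocks (G + μ⁻¹ • (Tᵀ * (1 - D) * T)) (Tᵀ * (1 - D)) ((1 - D) * T) (-(μ • D))

theorem continuous_saddleMatrix (μ : ℝ) (T : Matrix m n ℝ) :
    Continuous fun p : Matrix m m ℝ × Matrix n n ℝ => saddleMatrix μ T p.1 p.2 := by
  unfold saddleMatrix
  fun_prop

theorem eq_zero_of_saddleMatrix_mulVec_eq_zero [Fintype n] {μ : ℝ} (hμ : 0 < μ) {T : Matrix m n ℝ}
    (hT : Function.Injective fun v => v ᵥ* T) {D : Matrix m m ℝ} (hD : D.PosSemidef)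
    (hE : (1 - D).PosSemidef) {G : Matrix n n ℝ} (hG : G.PosDef) {x : n ⊕ m → ℝ}
    (hx : saddleMatrix μ T D G *ᵥ x = 0) : x = 0 := by
  have hB : Tᵀ * (1 - D) = ((1 - D) * T)ᵀ := by
    rw [transpose_mul, transpose_sub, transpose_one, ← conjTranspose_eq_transpose_of_trivial D,
      hD.isHermitian.eq]
  have hA : (G + μ⁻¹ • (Tᵀ * (1 - D) * T)).PosDef := by
    refine hG.add_posSemidef (PosSemidef.smul ?_ (inv_nonneg.2 hμ.le))
    simpa only [conjTranspose_eq_transpose_of_trivial] using hE.conjTranspose_mul_mul_same T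
  have hx' : fromBlocks (G + μ⁻¹ • (Tᵀ * (1 - D) * T)) ((1 - D) * T)ᵀ ((1 - D) * T) (-(μ • D))
      *ᵥ x = 0 := by
    rwa [← hB]
  refine eq_zero_of_fromBlocks_mulVec_eq_zero hA (hD.smul hμ.le) (fun v hBv hCv => hT ?_) hx'
  have hDv : D *ᵥ v = 0 := by
    rwa [smul_mulVec, smul_eq_zero, or_iff_right hμ.ne'] at hCv
  rw [← hB, ← mulVec_mulVec, sub_mulVec, one_mulVec, hDv, sub_zero, mulVec_transpose] at hBv
  simpa using hBv

end

end Matrix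

theorem uniform_lower_bound_general {n m : ℕ} (μ mf Lf : ℝ)
    (hμ : 0 < μ) (hmf : 0 < mf)
    (T : Matrix (Fin m) (Fin n) ℝ) (hT : T.rank = m) :
    ∃ κ₁ : ℝ, 0 < κ₁ ∧
      ∀ (D : Matrix (Fin m) (Fin m) ℝ) (G : Matrix (Fin n) (Fin n) ℝ),
        D.PosSemidef → (1 - D).PosSemidef →
        (G - mf • 1).PosSemidef → (Lf • (1 : Matrix (Fin n) (Fin n) ℝ) - G).PosSemidef →
        ((Matrix.fromBlocks
            (G + μ⁻¹ • (Tᵀ * (1 - D) * T)) (Tᵀ * (1 - D))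
            ((1 - D) * T) (-(μ • D)))ᵀ *
          (Matrix.fromBlocks
            (G + μ⁻¹ • (Tᵀ * (1 - D) * T)) (Tᵀ * (1 - D))
            ((1 - D) * T) (-(μ • D))) -
          κ₁ • 1).PosSemidef := by
  have hTinj : Function.Injective fun v => v ᵥ* T :=
    vecMul_injective_of_rank_eq_card (by rwa [Fintype.card_fin])
  have hGpos {G : Matrix (Fin n) (Fin n) ℝ} (h : mf • 1 ≤ G) : G.PosDef := by
    simpa using (PosDef.one.smul hmf).add_posSemidef (le_iff.mp h)
  obtain ⟨κ₁, hκ₁, hQ⟩ := exists_pos_forall_posSemidef_transpose_mul_self_sub_smul_one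
    (isCompact_Icc.prod (isCompact_Icc (a := mf • 1) (b := Lf • 1)))
    (continuous_saddleMatrix μ T).continuousOn
    fun p hp _ => eq_zero_of_saddleMatrix_mulVec_eq_zero hμ hTinj hp.1.1.posSemidef hp.1.2
      (hGpos hp.2.1)
  exact ⟨κ₁, hκ₁, fun D G hD hE hGm hGL => hQ (D, G) ⟨⟨hD.nonneg, hE⟩, hGm, hGL⟩⟩

/-- There is a uniform `κ₁ > 0`, depending only on `m_f, L_f, μ, T`, such that
`QᵀQ ⪰ κ₁ I` for every admissible pair `(D, G)` with `0 ⪯ D ⪯ I` and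
`m_f I ⪯ G ⪯ L_f I`, where
`Q = [[G + μ⁻¹Tᵀ(I−D)T, Tᵀ(I−D)], [(I−D)T, −μD]]`. -/
theorem uniform_lower_bound {n m : ℕ} (μ mf Lf : ℝ)
    (hμ : 0 < μ) (hmf : 0 < mf) (hLf : mf ≤ Lf)
    (T : Matrix (Fin m) (Fin n) ℝ) (hT : T.rank = m) :
    ∃ κ₁ : ℝ, 0 < κ₁ ∧
      ∀ (D : Matrix (Fin m) (Fin m) ℝ) (G : Matrix (Fin n) (Fin n) ℝ),
        D.PosSemidef → (1 - D).PosSemidef →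
        (G - mf • 1).PosSemidef → (Lf • (1 : Matrix (Fin n) (Fin n) ℝ) - G).PosSemidef →
        ((Matrix.fromBlocks
            (G + μ⁻¹ • (Tᵀ * (1 - D) * T)) (Tᵀ * (1 - D))
            ((1 - D) * T) (-(μ • D)))ᵀ *
          (Matrix.fromBlocks
            (G + μ⁻¹ • (Tᵀ * (1 - D) * T)) (Tᵀ * (1 - D))
            ((1 - D) * T) (-(μ • D))) -
          κ₁ • 1).PosSemidef :=
  uniform_lower_bound_general μ mf Lf hμ hmf T hT
end
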